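/- arXiv:1903.03262 — 4 statements merged into one kernel-verified Lean document; each statement's English description precedes it below -/
import Mathlib

section
/- (Monsky) For a nonzero element f of Λ = ℤ_p[[Γ]], Γ ≅ ℤ_p^d, the zero set Δ_f = {χ ∈ Γ̂ : χ(f) = 0} is a proper subset of the set Γ̂ of continuous μ_{p^∞}-valued characters of Γ; i.e., there exists a continuous finite-order character χ of Γ with χ(f) ≠ 0. -/
open scoped Classical

set_option maxHeartbeats 1000000
set_option synthInstance.maxHeartbeats 400000

noncomputable section

variable (p d : ℕ) [Fact p.Prime]

/-- `Γ = ℤ_p^d`, written multiplicatively, with its natural (product) topology. -/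
abbrev IwGamma := Multiplicative (Fin d → ℤ_[p])

/-- The finite layer group `Γ/Γ^{pⁿ} ≅ (ℤ/pⁿ)^d`. -/
abbrev IwLayer (n : ℕ) := Multiplicative (Fin d → ZMod (p ^ n))

/-- The projection `Γ → Γ/Γ^{pⁿ}`. -/
def IwProj (n : ℕ) : IwGamma p d →* IwLayer p d n :=
  AddMonoidHom.toMultiplicative
    { toFun := fun x i => PadicInt.toZModPow n (x i)
      map_zero' := by funext i; simp
      map_add' := by intro a b; funext i; simp }

/-- The transition map `Γ/Γ^{pᵐ} → Γ/Γ^{pⁿ}` for `n ≤ m`. -/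
def IwLayerTrans {n m : ℕ} (h : n ≤ m) : IwLayer p d m →* IwLayer p d n :=
  AddMonoidHom.toMultiplicative
    { toFun := fun x i => ZMod.castHom (pow_dvd_pow p h) (ZMod (p ^ n)) (x i)
      map_zero' := funext fun i => map_zero _
      map_add' := fun a b => funext fun i => map_add _ _ _ }

/-- The group ring `ℤ_p[Γ/Γ^{pⁿ}]`. -/
abbrev IwRing (n : ℕ) := MonoidAlgebra ℤ_[p] (IwLayer p d n)

/-- The transition map `ℤ_p[Γ/Γ^{pᵐ}] → ℤ_p[Γ/Γ^{pⁿ}]`. -/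
def IwRingTrans {n m : ℕ} (h : n ≤ m) : IwRing p d m →ₐ[ℤ_[p]] IwRing p d n :=
  MonoidAlgebra.mapDomainAlgHom ℤ_[p] ℤ_[p] (IwLayerTrans p d h)

/-- The Iwasawa algebra `Λ = ℤ_p[[Γ]] = lim_← ℤ_p[Γ/Γ^{pⁿ}]`, realized as the
subalgebra of compatible families in `Π n, ℤ_p[Γ/Γ^{pⁿ}]`. -/
def IwAlgebra : Subalgebra ℤ_[p] (Π n, IwRing p d n) where
  carrier := {x | ∀ (n m : ℕ) (h : n ≤ m), IwRingTrans p d h (x m) = x n}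
  add_mem' := fun ha hb n m h => by
    simp only [Pi.add_apply, map_add]; rw [ha n m h, hb n m h]
  mul_mem' := fun ha hb n m h => by
    simp only [Pi.mul_apply, map_mul]; rw [ha n m h, hb n m h]
  algebraMap_mem' := fun r n m h => by
    simp only [Pi.algebraMap_apply, AlgHom.commutes]

/-- `Λ`, the Iwasawa algebra of `Γ = ℤ_p^d`. -/
abbrev IwAlg := IwAlgebra p d

/-- The canonical (group-like) embedding `Γ → Λˣ ⊂ Λ`, `γ ↦ [γ]`. -/
def IwOf : IwGamma p d →* IwAlg p d where
  toFun g :=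
    ⟨fun n => MonoidAlgebra.of ℤ_[p] (IwLayer p d n) (IwProj p d n g), by
      intro n m h
      show (IwRingTrans p d h) (MonoidAlgebra.single (IwProj p d m g) 1) = _
      rw [IwRingTrans]
      simp only [MonoidAlgebra.mapDomainAlgHom_apply, MonoidAlgebra.mapDomain_single]
      have : (IwLayerTrans p d h) ((IwProj p d m) g) = (IwProj p d n) g :=
        funext fun i => RingHom.congr_fun (PadicInt.zmod_cast_comp_toZModPow n m h) (g i)
      rw [this]
      rfl⟩
  map_one' := Subtype.ext (funext fun n => by simp [map_one])
  map_mul' a b := Subtype.ext (funext fun n => by simp [map_mul])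

/-- `ω_{σ,n} = σ^{pⁿ} − 1 ∈ Λ`. -/
def IwOmega (σ : IwGamma p d) (n : ℕ) : IwAlg p d := IwOf p d σ ^ p ^ n - 1

/-- `ν_{σ,r,m} = (σ^{pᵐ}−1)/(σ^{pʳ}−1) = Σ_{j<p^{m−r}} σ^{j·pʳ} ∈ Λ` (for `0 ≤ r ≤ m`). -/
def IwNu (σ : IwGamma p d) (r m : ℕ) : IwAlg p d :=
  ∑ j ∈ Finset.range (p ^ (m - r)), IwOf p d σ ^ (j * p ^ r)

/-- `ν_{σ,r,m}` with the convention `ν_{σ,−1,m} = σ^{pᵐ}−1` (index `r ∈ {−1,0,1,…}`). -/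
def IwNuz (σ : IwGamma p d) (r : ℤ) (m : ℕ) : IwAlg p d :=
  if r < 0 then IwOmega p d σ m else IwNu p d σ r.toNat m

/-- `ν_{n,m} = Π_i ν_{σ_i,n,m}` for a family `σ`. -/
def IwNuProd (σ : Fin d → IwGamma p d) (n m : ℕ) : IwAlg p d :=
  ∏ i, IwNu p d (σ i) n m

/-- `σ : Fin d → Γ` is a `ℤ_p`-basis of `Γ`. -/
def IsIwBasis (σ : Fin d → IwGamma p d) : Prop :=
  ∃ b : Module.Basis (Fin d) ℤ_[p] (Fin d → ℤ_[p]), ∀ i, b i = Multiplicative.toAdd (σ i)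

/-- A tight set of generators of `Γ`: topological `ℤ_p`-generators, none of which is a `p`-th
power, whose closed cyclic subgroups are pairwise distinct. -/
def IsTight {c : ℕ} (τ : Fin c → IwGamma p d) : Prop :=
  (Subgroup.closure (Set.range τ)).topologicalClosure = ⊤ ∧
    (∀ i, ¬∃ g : IwGamma p d, τ i = g ^ p) ∧
    ∀ i j, i ≠ j →
      (Subgroup.closure {τ i}).topologicalClosure ≠ (Subgroup.closure {τ j}).topologicalClosure

/-- The ideal `I_n = ker(Λ → ℤ_p[Γ/Γ^{pⁿ}])`. -/
def IwI (n : ℕ) : Ideal (IwAlg p d) :=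
  RingHom.ker ((Pi.evalRingHom (IwRing p d) n).comp (IwAlgebra p d).subtype)

/-- The ideal `J_n = (ν_{τ_1,0,n}, …, ν_{τ_c,0,n})` attached to a tight generating set. -/
def IwJ {c : ℕ} (τ : Fin c → IwGamma p d) (n : ℕ) : Ideal (IwAlg p d) :=
  Ideal.span (Set.range fun i => IwNu p d (τ i) 0 n)

/-- An algebraic closure of `ℚ_p`. -/
abbrev QpBar (p : ℕ) [Fact p.Prime] := AlgebraicClosure ℚ_[p]

noncomputable instance : Algebra ℤ_[p] (QpBar p) :=
  ((algebraMap ℚ_[p] (QpBar p)).comp (algebraMap ℤ_[p] ℚ_[p])).toAlgebra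

/-- The ring of integers `O` of `ℚ̄_p`: the integral closure of `ℤ_p`. -/
def QpBarInt : Subalgebra ℤ_[p] (QpBar p) := integralClosure ℤ_[p] (QpBar p)

/-- A continuous `μ_{p^∞}`-valued character of `Γ`, recorded by a level `n`
together with a character of the finite layer `Γ/Γ^{pⁿ}`;  all the values of such a
character are automatically `p`-power roots of unity. -/
structure IwCharacter (p d : ℕ) [Fact p.Prime] : Type where
  level : ℕ
  char : IwLayer p d level →* (QpBar p)ˣ

variable {p d}

/-- The value of a character on a group element. -/
def IwCharacter.evalGamma (χ : IwCharacter p d) (g : IwGamma p d) : (QpBar p)ˣ :=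
  χ.char (IwProj p d χ.level g)

/-- The value on an element of `Λ` of the `ℤ_p`-algebra homomorphism `Λ → O ⊆ ℚ̄_p`
canonically extending a character. -/
def IwCharacter.eval (χ : IwCharacter p d) (f : IwAlg p d) : QpBar p :=
  MonoidAlgebra.lift ℤ_[p] (QpBar p) (IwLayer p d χ.level)
    ((Units.coeHom (QpBar p)).comp χ.char) (f.1 χ.level)

/-- The algebra map `ℤ_p → ℚ̄_p` is injective. -/
lemma algebraMap_zp_qpbar_injective (p : ℕ) [Fact p.Prime] :
    Function.Injective (algebraMap ℤ_[p] (QpBar p)) := by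
  have h : algebraMap ℤ_[p] (QpBar p)
      = ((algebraMap ℚ_[p] (QpBar p)).comp (algebraMap ℤ_[p] ℚ_[p])) := rfl
  rw [h, RingHom.coe_comp]
  exact (algebraMap ℚ_[p] (QpBar p)).injective.comp
    (fun a b hab => Subtype.coe_injective (by simpa [PadicInt.algebraMap_apply] using hab))

/-- **Monsky.** For nonzero `f ∈ Λ = ℤ_p[[Γ]]`, the zero set
`Δ_f = {χ ∈ Γ̂ : χ(f) = 0}` is a proper subset of the set `Γ̂` of continuous `μ_{p^∞}`-valued
characters of `Γ`: there exists a continuous finite-order character `χ` with `χ(f) ≠ 0`. -/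
theorem monsky_zero_set_proper
    (p d : ℕ) [Fact p.Prime] (f : IwAlg p d) (hf : f ≠ 0) :
    {χ : IwCharacter p d | χ.eval f = 0} ≠ Set.univ := by
  intro hall
  have hall' : ∀ χ : IwCharacter p d, χ.eval f = 0 := fun χ =>
    Set.eq_univ_iff_forall.mp hall χ
  obtain ⟨n, hn⟩ : ∃ n, f.1 n ≠ 0 := by
    by_contra h
    push_neg at h
    exact hf (Subtype.ext (funext h))
  haveI : NeZero (p ^ n) := ⟨pow_ne_zero n (Fact.out : p.Prime).ne_zero⟩
  haveI : Finite (IwLayer p d n) := inferInstance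
  haveI : NeZero ((Monoid.exponent (IwLayer p d n) : QpBar p)) :=
    ⟨Nat.cast_ne_zero.mpr Monoid.exponent_ne_zero_of_finite⟩
  haveI : HasEnoughRootsOfUnity (QpBar p) (Monoid.exponent (IwLayer p d n)) := inferInstance
  let e : IwLayer p d n → ((IwLayer p d n →* (QpBar p)ˣ) →* QpBar p) := fun g =>
    (Units.coeHom (QpBar p)).comp (MonoidHom.eval g)
  have e_inj : Function.Injective e := by
    intro g g' hgg
    by_contra hne
    have hne' : g * g'⁻¹ ≠ 1 := fun h => hne (by rwa [mul_inv_eq_one] at h)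
    obtain ⟨φ, hφ⟩ :=
      CommGroup.exists_apply_ne_one_of_hasEnoughRootsOfUnity (IwLayer p d n) (QpBar p) hne'
    apply hφ
    have h1 : (φ g : QpBar p) = φ g' := by
      have := congrArg (fun ψ => ψ φ) hgg
      simpa [e] using this
    have h2 : φ g = φ g' := Units.ext h1
    rw [map_mul, map_inv, h2, mul_inv_cancel]
  have li : LinearIndependent (QpBar p) (fun g : IwLayer p d n => ⇑(e g)) :=
    (linearIndependent_monoidHom (IwLayer p d n →* (QpBar p)ˣ) (QpBar p)).comp e e_inj
  have key := linearIndependent_iff'.mp li (f.1 n).coeff.support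
      (fun g => algebraMap ℤ_[p] (QpBar p) ((f.1 n).coeff g)) (by
    funext χ
    have h0 := hall' ⟨n, χ⟩
    rw [IwCharacter.eval, MonoidAlgebra.lift_apply] at h0
    show (∑ g ∈ (f.1 n).coeff.support,
        algebraMap ℤ_[p] (QpBar p) ((f.1 n).coeff g) • ⇑(e g)) χ = (0 : QpBar p)
    rw [Finset.sum_apply]
    calc ∑ g ∈ (f.1 n).coeff.support, (algebraMap ℤ_[p] (QpBar p) ((f.1 n).coeff g) • ⇑(e g)) χ
        = ∑ g ∈ (f.1 n).coeff.support,
            algebraMap ℤ_[p] (QpBar p) ((f.1 n).coeff g)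
              * (((Units.coeHom (QpBar p)).comp χ) g) := by
          apply Finset.sum_congr rfl
          intro g _
          rw [Pi.smul_apply, smul_eq_mul]
          rfl
      _ = 0 := by
          unfold Finsupp.sum at h0
          simp only [Algebra.smul_def] at h0
          exact h0)
  apply hn
  ext g
  by_cases hg : g ∈ (f.1 n).coeff.support
  · exact algebraMap_zp_qpbar_injective p (by simpa using key g hg)
  · simpa using Finsupp.notMem_support_iff.mp hg

end
end

section
/- Let Γ ≅ ℤ_p^d with basis σ_1,…,σ_d and a tight generating set τ_1,…,τ_c. Fix r = (r_1,…,r_d) with r_i ≥ −1. Define I_{r,n} = (ν_{σ_1,r_1,n_1},…,ν_{σ_d,r_d,n_d}) and J_n = (ν_{τ_1,0,n},…,ν_{τ_c,0,n}) in Λ = ℤ_p[[Γ]]. Then the intersection over all n > 0 and all tuples n = (n_1,…,n_d) with n_i > r_i of the ideals I_{r,n} + J_n is zero. -/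
open scoped Classical

set_option maxHeartbeats 1000000
set_option synthInstance.maxHeartbeats 400000

noncomputable section

variable (p d : ℕ) [Fact p.Prime]

-- Auxiliary lemmas ---------------------------------------------------------

/-- Evaluation of the Iwasawa algebra at layer `m`. -/
def IwEval (m : ℕ) : IwAlg p d →+* IwRing p d m :=
  (Pi.evalRingHom (IwRing p d) m).comp (IwAlgebra p d).subtype

lemma IwEval_of (m : ℕ) (g : IwGamma p d) :
    IwEval p d m (IwOf p d g) = MonoidAlgebra.of ℤ_[p] (IwLayer p d m) (IwProj p d m g) := rfl

/-- The projection of any element of `Γ` to layer `m` has order dividing `p^m`. -/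
lemma IwProj_pow_pm (m : ℕ) (g : IwGamma p d) : (IwProj p d m g) ^ (p ^ m) = 1 := by
  have : Multiplicative.toAdd ((IwProj p d m g) ^ (p ^ m))
      = (p ^ m) • Multiplicative.toAdd (IwProj p d m g) := by
    simp
  apply Multiplicative.toAdd.injective
  rw [this]
  funext i
  show (p ^ m) • (PadicInt.toZModPow m (Multiplicative.toAdd g i)) = (0 : ZMod (p ^ m))
  rw [nsmul_eq_mul, ZMod.natCast_self, zero_mul]

/-- Periodic geometric sums: if `a^T = 1` then `∑_{j<kT} a^j = k ∑_{j<T} a^j`. -/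
lemma sum_pow_of_pow_eq_one {R : Type*} [CommRing R] (a : R) {T : ℕ} (h : a ^ T = 1)
    (k : ℕ) : ∑ j ∈ Finset.range (k * T), a ^ j = (k : R) * ∑ j ∈ Finset.range T, a ^ j := by
  induction k with
  | zero => simp
  | succ k ih =>
    rw [Nat.succ_mul, Finset.sum_range_add, ih]
    have hx : ∀ x, a ^ (k * T + x) = a ^ x := fun x => by
      rw [pow_add, mul_comm k T, pow_mul, h, one_pow, one_mul]
    simp_rw [hx]
    push_cast; ring

/-- The image of `ν_{σ,r,r+m+N+1}` in layer `m` is divisible by `p^{N+1}`. -/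
lemma IwNu_image_dvd (m N rr : ℕ) (g : IwGamma p d) :
    IwEval p d m (IwNu p d g rr (rr + (m + (N + 1)))) ∈
      Ideal.span {((p : IwRing p d m)) ^ N} := by
  set a : IwRing p d m :=
    (MonoidAlgebra.of ℤ_[p] (IwLayer p d m) (IwProj p d m g)) ^ (p ^ rr) with ha
  have haT : a ^ (p ^ m) = 1 := by
    rw [ha, ← pow_mul, ← map_pow, mul_comm (p ^ rr) (p ^ m), pow_mul,
      IwProj_pow_pm, one_pow, map_one]
  have hsub : rr + (m + (N + 1)) - rr = m + (N + 1) := by omega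
  have : IwEval p d m (IwNu p d g rr (rr + (m + (N + 1))))
      = ∑ j ∈ Finset.range (p ^ (m + (N + 1))), a ^ j := by
    rw [IwNu, map_sum, hsub]
    refine Finset.sum_congr rfl fun j _ => ?_
    rw [map_pow, IwEval_of, ha, ← pow_mul, mul_comm j (p ^ rr)]
  rw [this]
  have hdecomp : p ^ (m + (N + 1)) = p ^ (N + 1) * p ^ m := by rw [← pow_add]; ring_nf
  rw [hdecomp, sum_pow_of_pow_eq_one a haT]
  refine Ideal.mem_span_singleton.mpr ?_
  exact Dvd.dvd.mul_right (by rw [Nat.cast_pow]; exact pow_dvd_pow _ (Nat.le_succ N)) _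

/-- An element of `ℤ_p` divisible by every power of `p` is zero. -/
lemma PadicInt.eq_zero_of_forall_pow_dvd {p : ℕ} [Fact p.Prime] (a : ℤ_[p])
    (h : ∀ N : ℕ, (p : ℤ_[p]) ^ N ∣ a) : a = 0 := by
  by_contra ha
  have hp1 : (1 : ℝ) < p := by exact_mod_cast (Fact.out : p.Prime).one_lt
  obtain ⟨N, hN⟩ := exists_pow_lt_of_lt_one (norm_pos_iff.mpr ha)
    (inv_lt_one_of_one_lt₀ hp1 : (p : ℝ)⁻¹ < 1)
  have hle : ‖a‖ ≤ (p : ℝ) ^ (-(N : ℤ)) := by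
    rw [PadicInt.norm_le_pow_iff_mem_span_pow]
    exact Ideal.mem_span_singleton.mpr (h N)
  rw [zpow_neg, zpow_natCast, ← inv_pow] at hle
  exact absurd (lt_of_le_of_lt hle hN) (lt_irrefl _)

/-- **Lemma (b).** Fix a `ℤ_p`-basis `σ_1,…,σ_d` of `Γ`, a tight generating set
`τ_1,…,τ_c` and `r = (r_i)` with `r_i ≥ −1`.  With
`I_{r,n} = (ν_{σ_1,r_1,n_1},…,ν_{σ_d,r_d,n_d})` and `J_n = (ν_{τ_1,0,n},…,ν_{τ_c,0,n})`,
the intersection over all `n > 0` and all tuples `n = (n_i)` with `n_i > r_i` of the ideals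
`I_{r,n} + J_n` is zero. -/
theorem iInf_nu_ideal_add_J_eq_bot
    (p d c : ℕ) [Fact p.Prime] (σ : Fin d → IwGamma p d) (hσ : IsIwBasis p d σ)
    (τ : Fin c → IwGamma p d) (hτ : IsTight p d τ)
    (r : Fin d → ℤ) (hr : ∀ i, -1 ≤ r i) :
    (⨅ (n : ℕ) (_ : 0 < n) (nt : Fin d → ℕ) (_ : ∀ i, r i < (nt i : ℤ)),
        (Ideal.span (Set.range fun i => IwNuz p d (σ i) (r i) (nt i)) + IwJ p d τ n)) = ⊥ := by
  rw [eq_bot_iff]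
  intro x hx
  simp only [Ideal.mem_iInf] at hx
  -- It suffices to show every component of `x` vanishes.
  have hcomp : ∀ m : ℕ, IwEval p d m x = 0 := by
    intro m
    -- Every component is divisible by every power of `p`.
    have hdvd : ∀ N : ℕ, IwEval p d m x ∈ Ideal.span {((p : IwRing p d m)) ^ N} := by
      intro N
      set K : Ideal (IwRing p d m) := Ideal.span {((p : IwRing p d m)) ^ N} with hK
      -- choose parameters
      set n : ℕ := m + (N + 1) with hn
      set nt : Fin d → ℕ := fun i => (r i).toNat + (m + (N + 1)) with hnt
      have hn0 : 0 < n := by omega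
      have hnt0 : ∀ i, r i < (nt i : ℤ) := by
        intro i
        show r i < (((r i).toNat + (m + (N + 1)) : ℕ) : ℤ)
        omega
      have hmem := hx n hn0 nt hnt0
      rw [Ideal.add_eq_sup] at hmem
      obtain ⟨a, haI, b, hbJ, hab⟩ := Submodule.mem_sup.mp hmem
      have hmapI : IwEval p d m a ∈ K := by
        have := Ideal.mem_map_of_mem (IwEval p d m) haI
        rw [Ideal.map_span] at this
        refine Ideal.span_le.mpr ?_ this
        rintro _ ⟨_, ⟨i, rfl⟩, rfl⟩
        show IwEval p d m (IwNuz p d (σ i) (r i) (nt i)) ∈ K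
        by_cases hri : r i < 0
        · -- omega case: the image is zero
          have hzero : IwEval p d m (IwNuz p d (σ i) (r i) (nt i)) = 0 := by
            simp only [IwNuz, if_pos hri]
            rw [IwOmega, map_sub, map_one, map_pow, IwEval_of]
            have : nt i = m + ((r i).toNat + (N + 1)) := by
              show (r i).toNat + (m + (N + 1)) = m + ((r i).toNat + (N + 1)); omega
            rw [← map_pow, this, pow_add, pow_mul, IwProj_pow_pm, one_pow, map_one,
              sub_self]
          rw [hzero]; exact K.zero_mem
        · have : IwNuz p d (σ i) (r i) (nt i)
              = IwNu p d (σ i) (r i).toNat ((r i).toNat + (m + (N + 1))) := by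
            rw [IwNuz, if_neg hri]
          rw [this]
          exact IwNu_image_dvd p d m N _ (σ i)
      have hmapJ : IwEval p d m b ∈ K := by
        have := Ideal.mem_map_of_mem (IwEval p d m) hbJ
        rw [IwJ, Ideal.map_span] at this
        refine Ideal.span_le.mpr ?_ this
        rintro _ ⟨_, ⟨i, rfl⟩, rfl⟩
        show IwEval p d m (IwNu p d (τ i) 0 n) ∈ K
        have : IwNu p d (τ i) 0 n = IwNu p d (τ i) 0 (0 + (m + (N + 1))) := by
          rw [hn, zero_add]
        rw [this]
        exact IwNu_image_dvd p d m N 0 (τ i)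
      rw [← hab, map_add]
      exact K.add_mem hmapI hmapJ
    -- Extract coefficients.
    set y : IwRing p d m := IwEval p d m x with hy
    have hcoef : ∀ g : IwLayer p d m, y.coeff g = 0 := by
      intro g
      refine PadicInt.eq_zero_of_forall_pow_dvd (y.coeff g) fun N => ?_
      obtain ⟨z, hz⟩ := Ideal.mem_span_singleton.mp (hdvd N)
      have : (p : IwRing p d m) ^ N = MonoidAlgebra.single 1 ((p : ℤ_[p]) ^ N) := by
        rw [← Nat.cast_pow, MonoidAlgebra.natCast_def, Nat.cast_pow]
      rw [hz, this, MonoidAlgebra.single_one_mul_apply]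
      exact dvd_mul_right _ _
    exact MonoidAlgebra.coeff_eq_zero.mp (Finsupp.ext hcoef)
  -- Conclude.
  have : (x : Π n, IwRing p d n) = 0 := funext fun m => hcomp m
  exact Submodule.mem_bot _ |>.mpr (Subtype.ext this)

end
end

section
/- Let Γ ≅ ℤ_p^d with basis σ_1,…,σ_d, a tight generating set τ_1,…,τ_c, J_n = (ν_{τ_1,0,n},…,ν_{τ_c,0,n}) and ν_{n,m} = Π_i ν_{σ_i,n,m}. Then for m ≥ n, ν_{n,m}·J_n ⊆ J_m. -/
open scoped Classical

set_option maxHeartbeats 1000000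
set_option synthInstance.maxHeartbeats 400000

noncomputable section

variable (p d : ℕ) [Fact p.Prime]

namespace IwAux

variable (p d : ℕ) [Fact p.Prime]

instance instNeZeroPPow (n : ℕ) : NeZero (p ^ n) :=
  ⟨pow_ne_zero n (Nat.Prime.ne_zero Fact.out)⟩

/-- Evaluation at level `k`. -/
def ev (k : ℕ) : IwAlg p d →+* IwRing p d k :=
  (Pi.evalRingHom (IwRing p d) k).comp (IwAlgebra p d).subtype

lemma ev_apply (k : ℕ) (x : IwAlg p d) : ev p d k x = x.1 k := rfl

lemma mem_IwI {k : ℕ} {x : IwAlg p d} : x ∈ IwI p d k ↔ ev p d k x = 0 := Iff.rfl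

lemma ev_compat {n m : ℕ} (h : n ≤ m) (x : IwAlg p d) :
    IwRingTrans p d h (ev p d m x) = ev p d n x := x.2 n m h

lemma ev_IwOf (k : ℕ) (g : IwGamma p d) :
    ev p d k (IwOf p d g) = MonoidAlgebra.single (IwProj p d k g) 1 := rfl

lemma IwOf_pow (g : IwGamma p d) (e : ℕ) : IwOf p d g ^ e = IwOf p d (g ^ e) :=
  (map_pow (IwOf p d) g e).symm

lemma ev_IwOf_pow (k : ℕ) (g : IwGamma p d) (e : ℕ) :
    ev p d k (IwOf p d g ^ e) = MonoidAlgebra.single (IwProj p d k g ^ e) 1 := by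
  rw [IwOf_pow, ev_IwOf, map_pow]

lemma sum_range_mul_aux {M : Type*} [AddCommMonoid M] (f : ℕ → M) (A B : ℕ) :
    ∑ j ∈ Finset.range A, ∑ k ∈ Finset.range B, f (j * B + k)
      = ∑ l ∈ Finset.range (A * B), f l := by
  induction A with
  | zero => simp
  | succ a ih =>
      rw [Finset.sum_range_succ, ih, Nat.succ_mul, Finset.sum_range_add]

lemma nu_mul_nu (σ : IwGamma p d) {n m : ℕ} (h : n ≤ m) :
    IwNu p d σ n m * IwNu p d σ 0 n = IwNu p d σ 0 m := by
  unfold IwNu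
  simp only [Nat.sub_zero, pow_zero, mul_one]
  rw [Finset.sum_mul_sum]
  have : ∀ j k : ℕ, IwOf p d σ ^ (j * p ^ n) * IwOf p d σ ^ k
      = IwOf p d σ ^ (j * p ^ n + k) := fun j k => (pow_add _ _ _).symm
  simp only [this]
  rw [sum_range_mul_aux (fun l => IwOf p d σ ^ l) (p ^ (m - n)) (p ^ n),
    ← pow_add, Nat.sub_add_cancel h]

end IwAux
namespace IwAux
variable (p d : ℕ) [Fact p.Prime]

lemma omega_cocycle (a b : IwGamma p d) (m : ℕ) :
    IwOmega p d (a * b) m = IwOf p d a ^ p ^ m * IwOmega p d b m + IwOmega p d a m := by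
  unfold IwOmega
  rw [map_mul, mul_pow]; ring

lemma omega_inv (a : IwGamma p d) (m : ℕ) :
    IwOmega p d a⁻¹ m = -(IwOf p d a⁻¹ ^ p ^ m * IwOmega p d a m) := by
  unfold IwOmega
  have h : IwOf p d a⁻¹ ^ p ^ m * IwOf p d a ^ p ^ m = 1 := by
    rw [IwOf_pow, IwOf_pow, ← map_mul, ← mul_pow, inv_mul_cancel, one_pow, map_one]
  rw [mul_sub, h]; ring

lemma omega_one (m : ℕ) : IwOmega p d 1 m = 0 := by
  unfold IwOmega; rw [map_one, one_pow, sub_self]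

lemma nu_mul_omega (g : IwGamma p d) (m : ℕ) :
    IwNu p d g 0 m * IwOmega p d g 0 = IwOmega p d g m := by
  unfold IwNu IwOmega
  simp only [Nat.sub_zero, pow_zero, mul_one, pow_one]
  exact geom_sum_mul (IwOf p d g) (p ^ m)

lemma omega_mem_J {c : ℕ} (τ : Fin c → IwGamma p d) (m : ℕ) {g : IwGamma p d}
    (hg : g ∈ Subgroup.closure (Set.range τ)) :
    IwOmega p d g m ∈ IwJ p d τ m := by
  induction hg using Subgroup.closure_induction with
  | mem x hx =>
      obtain ⟨j, rfl⟩ := hx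
      rw [← nu_mul_omega]
      exact Ideal.mul_mem_right _ _ (Ideal.subset_span ⟨j, rfl⟩)
  | one => rw [omega_one]; exact zero_mem _
  | mul x y hx hy ihx ihy =>
      rw [omega_cocycle]
      exact add_mem (Ideal.mul_mem_left _ _ ihy) ihx
  | inv x hx ih =>
      rw [omega_inv]
      exact neg_mem (Ideal.mul_mem_left _ _ ih)

end IwAux
namespace IwAux
variable (p d : ℕ) [Fact p.Prime]

lemma layer_pow_self (k : ℕ) (y : IwLayer p d k) : y ^ p ^ k = 1 := by
  have : (y ^ p ^ k).toAdd = (0 : Fin d → ZMod (p ^ k)) := by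
    rw [toAdd_pow]
    funext i
    simp only [Pi.smul_apply, nsmul_eq_mul, Nat.cast_pow]
    rw [show ((p : ZMod (p ^ k)) ^ k : ZMod (p ^ k)) = ((p ^ k : ℕ) : ZMod (p ^ k)) by
      push_cast; ring, ZMod.natCast_self, zero_mul]
    simp
  exact Multiplicative.toAdd.injective this

lemma ev_omega_self (u : IwGamma p d) (k : ℕ) : ev p d k (IwOmega p d u k) = 0 := by
  unfold IwOmega
  rw [map_sub, map_one, ev_IwOf_pow, layer_pow_self]
  rw [MonoidAlgebra.one_def, sub_self]

lemma omega_pow (u : IwGamma p d) (K m : ℕ) :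
    IwOmega p d (u ^ p ^ K) m = IwOmega p d u (K + m) := by
  unfold IwOmega
  simp only [IwOf_pow, ← pow_mul, ← pow_add]

lemma exists_root {h : IwGamma p d} (k : ℕ)
    (hh : ∀ i, (p : ℤ_[p]) ^ k ∣ h.toAdd i) : ∃ u : IwGamma p d, h = u ^ p ^ k := by
  choose u hu using hh
  refine ⟨Multiplicative.ofAdd u, Multiplicative.toAdd.injective ?_⟩
  rw [toAdd_pow]
  funext i
  simp only [Pi.smul_apply, nsmul_eq_mul, Nat.cast_pow]
  exact hu i

lemma dense_approx {c : ℕ} (τ : Fin c → IwGamma p d)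
    (hτ1 : (Subgroup.closure (Set.range τ)).topologicalClosure = ⊤)
    (g : IwGamma p d) (k : ℕ) :
    ∃ w ∈ Subgroup.closure (Set.range τ), ∃ u : IwGamma p d, g = w * u ^ p ^ k := by
  have hg : g ∈ _root_.closure ((Subgroup.closure (Set.range τ) : Subgroup (IwGamma p d)) :
      Set (IwGamma p d)) := by
    have : g ∈ (Subgroup.closure (Set.range τ)).topologicalClosure := by
      rw [hτ1]; trivial
    exact this
  set r : ℝ := (p : ℝ) ^ (-(k : ℤ)) with hr
  have hrpos : 0 < r := by
    apply zpow_pos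
    exact_mod_cast (Fact.out : p.Prime).pos
  set O : Set (IwGamma p d) := {x | ∀ i, ‖x.toAdd i - g.toAdd i‖ < r} with hO
  have hOopen : IsOpen O := by
    have : O = ⋂ i, (fun x : IwGamma p d => x.toAdd i) ⁻¹' Metric.ball (g.toAdd i) r := by
      ext x; simp [hO, Metric.mem_ball, dist_eq_norm]
    rw [this]
    exact isOpen_iInter_of_finite fun i =>
      (Metric.isOpen_ball).preimage ((continuous_apply i).comp continuous_toAdd)
  have hgO : g ∈ O := fun i => by simpa using hrpos
  obtain ⟨w, hwO, hwS⟩ := _root_.mem_closure_iff.mp hg O hOopen hgO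
  have hdvd : ∀ i, (p : ℤ_[p]) ^ k ∣ (w⁻¹ * g).toAdd i := by
    intro i
    have : ‖(w⁻¹ * g).toAdd i‖ ≤ (p : ℝ) ^ (-(k : ℤ)) := by
      have h1 : (w⁻¹ * g).toAdd i = -(w.toAdd i - g.toAdd i) := by
        simp [toAdd_mul]; ring
      rw [h1, norm_neg]
      exact le_of_lt (hwO i)
    rw [PadicInt.norm_le_pow_iff_mem_span_pow, Ideal.mem_span_singleton] at this
    exact this
  obtain ⟨u, hu⟩ := exists_root p d k hdvd
  exact ⟨w, hwS, u, by rw [← hu, mul_inv_cancel_left]⟩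

lemma omega_mem_J_sup_I {c : ℕ} (τ : Fin c → IwGamma p d)
    (hτ1 : (Subgroup.closure (Set.range τ)).topologicalClosure = ⊤)
    (g : IwGamma p d) (m K : ℕ) :
    IwOmega p d g m ∈ IwJ p d τ m ⊔ IwI p d K := by
  obtain ⟨w, hwS, u, rfl⟩ := dense_approx p d τ hτ1 g K
  rw [omega_cocycle]
  refine add_mem (Submodule.mem_sup_right (Ideal.mul_mem_left _ _ ?_))
    (Submodule.mem_sup_left (omega_mem_J p d τ m hwS))
  rw [omega_pow, mem_IwI, ← ev_compat p d (Nat.le_add_right K m), ev_omega_self, map_zero]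

end IwAux
namespace IwAux
variable (p d : ℕ) [Fact p.Prime]

/-- A set-theoretic section of the projection to level `m`. -/
def sec (m : ℕ) (y : IwLayer p d m) : IwGamma p d :=
  Multiplicative.ofAdd (fun i => ((y.toAdd i).val : ℤ_[p]))

lemma proj_sec (m : ℕ) (y : IwLayer p d m) : IwProj p d m (sec p d m y) = y := by
  apply Multiplicative.toAdd.injective
  funext i
  show PadicInt.toZModPow m (((y.toAdd i).val : ℤ_[p])) = y.toAdd i
  rw [map_natCast, ZMod.natCast_val, ZMod.cast_id]

lemma exists_root_of_proj_eq_one {m : ℕ} {h : IwGamma p d} (hh : IwProj p d m h = 1) :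
    ∃ u : IwGamma p d, h = u ^ p ^ m := by
  apply exists_root
  intro i
  have : PadicInt.toZModPow m (h.toAdd i) = 0 := by
    have := congrFun (congrArg Multiplicative.toAdd hh) i
    exact this
  have hker : h.toAdd i ∈ RingHom.ker (PadicInt.toZModPow (p := p) m) := this
  rw [PadicInt.ker_toZModPow, Ideal.mem_span_singleton] at hker
  exact hker

lemma ev_smul (k : ℕ) (a : ℤ_[p]) (x : IwAlg p d) :
    ev p d k (a • x) = a • ev p d k x := rfl

/-- The ideal generated by all `ω_{g,m}`. -/
def omegaSpan (m : ℕ) : Ideal (IwAlg p d) :=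
  Ideal.span (Set.range fun g => IwOmega p d g m)

lemma finsuppSum_mem_omegaSpan (m : ℕ) (F : IwGamma p d →₀ ℤ_[p])
    (hev : ev p d m (F.sum fun g a => a • IwOf p d g) = 0) :
    (F.sum fun g a => a • IwOf p d g) ∈ omegaSpan p d m := by
  have hsplit : (F.sum fun g a => a • IwOf p d g)
      = (F.sum fun g a => a • (IwOf p d g - IwOf p d (sec p d m (IwProj p d m g))))
        + (F.sum fun g a => a • IwOf p d (sec p d m (IwProj p d m g))) := by
    rw [← Finsupp.sum_add]
    congr 1
    funext g a
    rw [smul_sub, sub_add_cancel]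
  have hmapzero : (MonoidAlgebra.ofCoeff (F.mapDomain (IwProj p d m)) : MonoidAlgebra ℤ_[p] (IwLayer p d m)) = 0 := by
    have : ev p d m (F.sum fun g a => a • IwOf p d g) = MonoidAlgebra.ofCoeff (F.mapDomain (IwProj p d m)) := by
      rw [map_finsuppSum]
      rw [Finsupp.mapDomain, MonoidAlgebra.ofCoeff_finsuppSum]
      congr 1
      funext g a
      rw [ev_smul, ev_IwOf, MonoidAlgebra.smul_single', mul_one]
      rfl
    rw [← this, hev]
  have hsecond : (F.sum fun g a => a • IwOf p d (sec p d m (IwProj p d m g))) = 0 := by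
    have := Finsupp.sum_mapDomain_index (f := IwProj p d m) (s := F)
      (h := fun y a => a • IwOf p d (sec p d m y))
      (fun y => by simp) (fun y a b => by simp [add_smul])
    rw [← this, MonoidAlgebra.ofCoeff_eq_zero.mp hmapzero, Finsupp.sum_zero_index]
  rw [hsplit, hsecond, add_zero]
  apply Submodule.sum_mem
  intro g _
  apply Submodule.smul_of_tower_mem
  have hker : IwProj p d m (g * (sec p d m (IwProj p d m g))⁻¹) = 1 := by
    rw [map_mul, map_inv, proj_sec, mul_inv_cancel]
  obtain ⟨u, hu⟩ := exists_root_of_proj_eq_one p d hker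
  have : IwOf p d g - IwOf p d (sec p d m (IwProj p d m g))
      = IwOf p d (sec p d m (IwProj p d m g)) * IwOmega p d u m := by
    unfold IwOmega
    rw [IwOf_pow, ← hu, mul_sub, mul_one, ← map_mul, mul_comm (sec p d m (IwProj p d m g)),
      inv_mul_cancel_right]
  rw [this]
  exact Ideal.mul_mem_left _ _ (Ideal.subset_span ⟨u, rfl⟩)

end IwAux
namespace IwAux
variable (p d : ℕ) [Fact p.Prime]

instance instFintypeLayer (n : ℕ) : Fintype (IwLayer p d n) :=
  inferInstanceAs (Fintype (Fin d → ZMod (p ^ n)))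

/-- Reconstruct a group-ring element from its coefficient function. -/
def toRing (n : ℕ) (f : IwLayer p d n → ℤ_[p]) : IwRing p d n :=
  ∑ y : IwLayer p d n, MonoidAlgebra.single y (f y)

lemma toRing_coe (n : ℕ) (x : IwRing p d n) : toRing p d n ⇑x.coeff = x := by
  have h1 : (∑ y ∈ x.coeff.support, MonoidAlgebra.single y (x.coeff y)) = x :=
    MonoidAlgebra.sum_coeff_single x
  unfold toRing
  refine Eq.trans ?_ h1
  refine (Finset.sum_subset (Finset.subset_univ _) ?_).symm
  intro y _ hy
  rw [Finsupp.notMem_support_iff.mp hy]; exact MonoidAlgebra.single_zero y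

lemma toRing_apply (n : ℕ) (f : IwLayer p d n → ℤ_[p]) (y : IwLayer p d n) :
    (toRing p d n f).coeff y = f y := by
  unfold toRing
  rw [MonoidAlgebra.coeff_sum, Finset.sum_apply']
  simp [Finsupp.single_apply]

lemma coeff_trans {n n' : ℕ} (h : n ≤ n') (f : IwLayer p d n' → ℤ_[p]) (y : IwLayer p d n) :
    (IwRingTrans p d h (toRing p d n' f)).coeff y
      = ∑ u ∈ Finset.univ.filter (fun u => IwLayerTrans p d h u = y), f u := by
  unfold toRing
  rw [map_sum (IwRingTrans p d h) _ Finset.univ]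
  have : ∀ u : IwLayer p d n', IwRingTrans p d h (MonoidAlgebra.single u (f u))
      = MonoidAlgebra.single (IwLayerTrans p d h u) (f u) := by
    intro u
    rw [IwRingTrans]
    simp [MonoidAlgebra.mapDomainAlgHom_apply, Finsupp.mapDomain_single]
  rw [Finset.sum_congr rfl fun u _ => this u, MonoidAlgebra.coeff_sum, Finset.sum_apply']
  rw [Finset.sum_filter]
  congr 1
  funext u
  rw [MonoidAlgebra.coeff_single, Finsupp.single_apply]

lemma coeff_mul (n : ℕ) (f : IwLayer p d n → ℤ_[p]) (gR : IwRing p d n) (y : IwLayer p d n) :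
    (toRing p d n f * gR).coeff y = ∑ u : IwLayer p d n, f u * gR.coeff (u⁻¹ * y) := by
  unfold toRing
  rw [Finset.sum_mul, MonoidAlgebra.coeff_sum, Finset.sum_apply']
  congr 1
  funext u
  rw [MonoidAlgebra.coeff_single_mul_apply]

lemma mem_span_of_forall_mem_sup (c' : ℕ) (G : Fin c' → IwAlg p d) (z : IwAlg p d)
    (hz : ∀ K, z ∈ Ideal.span (Set.range G) ⊔ IwI p d K) :
    z ∈ Ideal.span (Set.range G) := by
  set X := Fin c' → Π n : ℕ, (IwLayer p d n → ℤ_[p]) with hX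
  set C : ℕ → Set X := fun K =>
    {b | (∀ j (n n' : ℕ) (h : n ≤ n'), n' ≤ K →
          IwRingTrans p d h (toRing p d n' (b j n')) = toRing p d n (b j n)) ∧
        ∀ n ≤ K, (∑ j, toRing p d n (b j n) * ev p d n (G j)) = ev p d n z} with hC
  have hdec : ∀ K, C (K + 1) ⊆ C K := by
    intro K b hb
    exact ⟨fun j n n' h hK => hb.1 j n n' h (hK.trans (Nat.le_succ K)),
      fun n hn => hb.2 n (hn.trans (Nat.le_succ K))⟩
  have hne : ∀ K, (C K).Nonempty := by
    intro K
    obtain ⟨ja, hja, ie, hie, hsum⟩ := Submodule.mem_sup.mp (hz K)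
    obtain ⟨A, hA⟩ := Ideal.mem_span_range_iff_exists_fun.mp hja
    refine ⟨fun j n => ⇑(ev p d n (A j)).coeff, ?_, ?_⟩
    · intro j n n' h _
      rw [toRing_coe, toRing_coe, ev_compat]
    · intro n hn
      have hie' : ev p d n ie = 0 := by
        rw [← ev_compat p d hn, (mem_IwI p d).mp hie, map_zero]
      have : ∀ j, toRing p d n ⇑(ev p d n (A j)).coeff * ev p d n (G j)
          = ev p d n (A j * G j) := by
        intro j; rw [toRing_coe]; exact (map_mul _ _ _).symm
      rw [Finset.sum_congr rfl fun j _ => this j, ← map_sum, hA, ← hsum, map_add, hie',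
        add_zero]
  have hclosed : ∀ K, IsClosed (C K) := by
    intro K
    have h1 : ∀ (j : Fin c') (n n' : ℕ) (h : n ≤ n'),
        IsClosed {b : X | IwRingTrans p d h (toRing p d n' (b j n')) = toRing p d n (b j n)} := by
      intro j n n' h
      have : {b : X | IwRingTrans p d h (toRing p d n' (b j n')) = toRing p d n (b j n)}
          = ⋂ y : IwLayer p d n,
            {b : X | ∑ u ∈ Finset.univ.filter (fun u => IwLayerTrans p d h u = y), b j n' u
              = b j n y} := by
        ext b
        simp only [Set.mem_setOf_eq, Set.mem_iInter]
        constructor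
        · intro hb y
          rw [← coeff_trans, hb, toRing_apply]
        · intro hb
          apply MonoidAlgebra.ext
          apply Finsupp.ext
          intro y
          rw [coeff_trans, toRing_apply]
          exact hb y
      rw [this]
      refine isClosed_iInter fun y => isClosed_eq ?_ ?_
      · exact continuous_finset_sum _ fun u _ =>
          (continuous_apply u).comp ((continuous_apply n').comp (continuous_apply j))
      · exact (continuous_apply y).comp ((continuous_apply n).comp (continuous_apply j))
    have h2 : ∀ n : ℕ,
        IsClosed {b : X | (∑ j, toRing p d n (b j n) * ev p d n (G j)) = ev p d n z} := by
      intro n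
      have : {b : X | (∑ j, toRing p d n (b j n) * ev p d n (G j)) = ev p d n z}
          = ⋂ y : IwLayer p d n,
            {b : X | ∑ j, ∑ u : IwLayer p d n, b j n u * (ev p d n (G j)).coeff (u⁻¹ * y)
              = (ev p d n z).coeff y} := by
        have key : ∀ (b : X) (y : IwLayer p d n),
            (∑ j, toRing p d n (b j n) * ev p d n (G j)).coeff y
              = ∑ j, ∑ u : IwLayer p d n, b j n u * (ev p d n (G j)).coeff (u⁻¹ * y) := by
          intro b y
          rw [MonoidAlgebra.coeff_sum, Finset.sum_apply']
          exact Finset.sum_congr rfl fun j _ => coeff_mul p d n _ _ y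
        ext b
        simp only [Set.mem_setOf_eq, Set.mem_iInter]
        constructor
        · intro hb y
          rw [← key, hb]
        · intro hb
          apply MonoidAlgebra.ext
          apply Finsupp.ext
          intro y
          rw [key]
          exact hb y
      rw [this]
      refine isClosed_iInter fun y => isClosed_eq ?_ continuous_const
      refine continuous_finset_sum _ fun j _ => continuous_finset_sum _ fun u _ => ?_
      exact Continuous.mul
        ((continuous_apply u).comp ((continuous_apply n).comp (continuous_apply j)))
        continuous_const
    have : C K = (⋂ j, ⋂ n, ⋂ n', ⋂ (h : n ≤ n'), ⋂ (_ : n' ≤ K),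
        {b : X | IwRingTrans p d h (toRing p d n' (b j n')) = toRing p d n (b j n)})
        ∩ ⋂ n, ⋂ (_ : n ≤ K),
          {b : X | (∑ j, toRing p d n (b j n) * ev p d n (G j)) = ev p d n z} := by
      ext b
      simp only [hC, Set.mem_setOf_eq, Set.mem_inter_iff, Set.mem_iInter]
    rw [this]
    exact IsClosed.inter
      (isClosed_iInter fun j => isClosed_iInter fun n => isClosed_iInter fun n' =>
        isClosed_iInter fun h => isClosed_iInter fun _ => h1 j n n' h)
      (isClosed_iInter fun n => isClosed_iInter fun _ => h2 n)
  obtain ⟨b, hb⟩ := IsCompact.nonempty_iInter_of_sequence_nonempty_isCompact_isClosed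
    C hdec hne ((hclosed 0).isCompact) hclosed
  rw [Set.mem_iInter] at hb
  set A : Fin c' → IwAlg p d := fun j =>
    ⟨fun n => toRing p d n (b j n), fun n n' h => (hb n').1 j n n' h le_rfl⟩ with hA
  have hz' : z = ∑ j, A j * G j := by
    apply Subtype.ext
    funext n
    have h2 := (hb n).2 n le_rfl
    have : ((∑ j, A j * G j : IwAlg p d) : Π k, IwRing p d k) n
        = ∑ j, toRing p d n (b j n) * ev p d n (G j) := by
      calc ((∑ j, A j * G j : IwAlg p d) : Π k, IwRing p d k) n
          = (∑ j, ((A j * G j : IwAlg p d) : Π k, IwRing p d k)) n := by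
            rw [AddSubmonoidClass.coe_finset_sum]
        _ = ∑ j, toRing p d n (b j n) * ev p d n (G j) := by
            rw [Finset.sum_apply]; rfl
    rw [this, h2]; rfl
  rw [hz']
  exact Ideal.sum_mem _ fun j _ =>
    Ideal.mul_mem_left _ _ (Ideal.subset_span ⟨j, rfl⟩)

end IwAux
namespace IwAux
variable (p d : ℕ) [Fact p.Prime]

lemma toAdd_prod {ι : Type*} {G : Type*} [AddCommMonoid G] (s : Finset ι)
    (f : ι → Multiplicative G) : (∏ i ∈ s, f i).toAdd = ∑ i ∈ s, (f i).toAdd := by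
  induction s using Finset.cons_induction with
  | empty => rfl
  | cons a s ha ih => rw [Finset.prod_cons, Finset.sum_cons, toAdd_mul, ih]

/-- The image of `Γ^{pⁿ}` in the layer at level `m`, as a finset. -/
def layerImage (n m : ℕ) : Finset (IwLayer p d m) :=
  Finset.image (fun v : Fin d → ZMod (p ^ m) =>
    Multiplicative.ofAdd ((p ^ n : ℕ) • v)) Finset.univ

lemma ev_nuProd (σ : Fin d → IwGamma p d) (hσ : IsIwBasis p d σ) {n m : ℕ} (hnm : n ≤ m) :
    ev p d m (IwNuProd p d σ n m)
      = ∑ h ∈ layerImage p d n m, MonoidAlgebra.single h (1 : ℤ_[p]) := by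
  obtain ⟨b, hb⟩ := hσ
  have ppos : 0 < p := (Fact.out : p.Prime).pos
  set Bb : Matrix (Fin d) (Fin d) (ZMod (p ^ m)) :=
    Matrix.of fun i j => PadicInt.toZModPow m (b i j) with hBb
  -- determinant is a unit
  have hBdet : IsUnit Bb.det := by
    set f := (Pi.basisFun ℤ_[p] (Fin d)).equiv b (Equiv.refl _) with hf
    have h1 : IsUnit (LinearMap.det
        (f : (Fin d → ℤ_[p]) →ₗ[ℤ_[p]] Fin d → ℤ_[p])) := f.isUnit_det'
    have h2 : LinearMap.toMatrix (Pi.basisFun ℤ_[p] (Fin d)) (Pi.basisFun ℤ_[p] (Fin d))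
        (f : (Fin d → ℤ_[p]) →ₗ[ℤ_[p]] Fin d → ℤ_[p]) = (Matrix.of fun i j => b i j).transpose := by
      ext i j
      rw [LinearMap.toMatrix_apply, Pi.basisFun_repr]
      have : (f : (Fin d → ℤ_[p]) →ₗ[ℤ_[p]] Fin d → ℤ_[p]) (Pi.basisFun ℤ_[p] (Fin d) j)
          = b j := by
        rw [hf]
        exact (Pi.basisFun ℤ_[p] (Fin d)).equiv_apply j b (Equiv.refl _)
      rw [this]
      rfl
    have h3 : IsUnit (Matrix.of fun i j => b i j).det := by
      rw [← Matrix.det_transpose, ← h2, LinearMap.det_toMatrix]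
      exact h1
    have h5 := h3.map (PadicInt.toZModPow m)
    rw [RingHom.map_det, RingHom.mapMatrix_apply] at h5
    exact h5
  have hproj : ∀ i, (IwProj p d m (σ i)).toAdd = Bb i := by
    intro i
    funext j
    show PadicInt.toZModPow m ((σ i).toAdd j) = PadicInt.toZModPow m (b i j)
    rw [hb i]
  -- coefficient vector of g
  set cg : (Fin d → ℕ) → (Fin d → ZMod (p ^ m)) :=
    fun g i => ((g i * p ^ n : ℕ) : ZMod (p ^ m)) with hcg
  set Ψ : (Fin d → ℕ) → IwLayer p d m :=
    fun g => ∏ i, IwProj p d m (σ i) ^ (g i * p ^ n) with hΨ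
  have hΨadd : ∀ g, (Ψ g).toAdd = Matrix.vecMul (cg g) Bb := by
    intro g
    rw [hΨ]
    funext j
    rw [toAdd_prod]
    show (∑ i, (IwProj p d m (σ i) ^ (g i * p ^ n)).toAdd) j = ∑ i, cg g i * Bb i j
    rw [Finset.sum_apply]
    refine Finset.sum_congr rfl fun i _ => ?_
    rw [toAdd_pow, hproj i, hcg]
    simp only [Pi.smul_apply, nsmul_eq_mul, Nat.cast_mul, Nat.cast_pow]
    try push_cast
    try ring
  have hcancel : ∀ g g', Ψ g = Ψ g' → cg g = cg g' := by
    intro g g' hgg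
    have h1 : Matrix.vecMul (cg g) Bb = Matrix.vecMul (cg g') Bb := by
      rw [← hΨadd, ← hΨadd, hgg]
    have h2 := congrArg (fun w => Matrix.vecMul w Bb⁻¹) h1
    simpa [Matrix.vecMul_vecMul, Matrix.mul_nonsing_inv Bb hBdet, Matrix.vecMul_one] using h2
  have hmod : p ^ m = p ^ (m - n) * p ^ n := by
    rw [← pow_add, Nat.sub_add_cancel hnm]
  set piS : Finset (Fin d → ℕ) :=
    Fintype.piFinset (fun _ : Fin d => Finset.range (p ^ (m - n))) with hpiS
  have hinj : ∀ g ∈ piS, ∀ g' ∈ piS, Ψ g = Ψ g' → g = g' := by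
    intro g hg g' hg' hgg
    have hc := hcancel g g' hgg
    funext i
    have h1 : ((g i * p ^ n : ℕ) : ZMod (p ^ m)) = ((g' i * p ^ n : ℕ) : ZMod (p ^ m)) :=
      congrFun hc i
    rw [ZMod.natCast_eq_natCast_iff] at h1
    rw [hmod] at h1
    have h2 := Nat.ModEq.mul_right_cancel' (pow_ne_zero n ppos.ne') h1
    have hlt : g i < p ^ (m - n) := Finset.mem_range.mp (Fintype.mem_piFinset.mp hg i)
    have hlt' : g' i < p ^ (m - n) := Finset.mem_range.mp (Fintype.mem_piFinset.mp hg' i)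
    have := h2
    unfold Nat.ModEq at this
    rwa [Nat.mod_eq_of_lt hlt, Nat.mod_eq_of_lt hlt'] at this
  have himg : piS.image Ψ = layerImage p d n m := by
    apply Finset.Subset.antisymm
    · intro h hh
      obtain ⟨g, hg, rfl⟩ := Finset.mem_image.mp hh
      apply Finset.mem_image.mpr
      refine ⟨∑ i, g i • Bb i, Finset.mem_univ _, ?_⟩
      apply Multiplicative.toAdd.injective
      rw [hΨadd]
      show (p ^ n : ℕ) • ∑ i, g i • Bb i = Matrix.vecMul (cg g) Bb
      rw [Finset.smul_sum]
      funext j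
      rw [Finset.sum_apply]
      show ∑ i, ((p ^ n : ℕ) • (g i • Bb i)) j = ∑ i, cg g i * Bb i j
      refine Finset.sum_congr rfl fun i _ => ?_
      rw [Pi.smul_apply, Pi.smul_apply, smul_smul, nsmul_eq_mul]
      show (((p ^ n * g i : ℕ)) : ZMod (p ^ m)) * Bb i j
          = ((g i * p ^ n : ℕ) : ZMod (p ^ m)) * Bb i j
      push_cast
      ring
    · intro h hh
      obtain ⟨v, _, rfl⟩ := Finset.mem_image.mp hh
      apply Finset.mem_image.mpr
      set cv := Matrix.vecMul v Bb⁻¹ with hcv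
      have hv : Matrix.vecMul cv Bb = v := by
        rw [hcv, Matrix.vecMul_vecMul, Matrix.nonsing_inv_mul Bb hBdet, Matrix.vecMul_one]
      set g : Fin d → ℕ := fun i => (cv i).val % p ^ (m - n) with hg
      refine ⟨g, Fintype.mem_piFinset.mpr fun i =>
        Finset.mem_range.mpr (Nat.mod_lt _ (pow_pos ppos _)), ?_⟩
      apply Multiplicative.toAdd.injective
      rw [hΨadd]
      show Matrix.vecMul (cg g) Bb = (p ^ n : ℕ) • v
      have hcgg : cg g = fun i => ((p ^ n : ℕ) : ZMod (p ^ m)) * cv i := by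
        funext i
        show ((g i * p ^ n : ℕ) : ZMod (p ^ m)) = ((p ^ n : ℕ) : ZMod (p ^ m)) * cv i
        have h1 : (g i * p ^ n : ℕ) ≡ (cv i).val * p ^ n [MOD p ^ m] := by
          have h0 := Nat.ModEq.mul_right' (c := p ^ n)
            (Nat.mod_modEq (cv i).val (p ^ (m - n)))
          rw [← hmod] at h0
          exact h0
        rw [show ((g i * p ^ n : ℕ) : ZMod (p ^ m))
            = (((cv i).val * p ^ n : ℕ) : ZMod (p ^ m)) from
          (ZMod.natCast_eq_natCast_iff _ _ _).mpr h1]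
        push_cast
        rw [ZMod.natCast_val, ZMod.cast_id]
        ring
      rw [hcgg]
      funext j
      show ∑ i, (((p ^ n : ℕ) : ZMod (p ^ m)) * cv i) * Bb i j = ((p ^ n : ℕ) • v) j
      have : ((p ^ n : ℕ) • v) j = ((p ^ n : ℕ) : ZMod (p ^ m)) * v j := by
        simp [nsmul_eq_mul]
      rw [this, ← hv]
      show ∑ i, (((p ^ n : ℕ) : ZMod (p ^ m)) * cv i) * Bb i j
          = ((p ^ n : ℕ) : ZMod (p ^ m)) * ∑ i, cv i * Bb i j
      rw [Finset.mul_sum]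
      refine Finset.sum_congr rfl fun i _ => by ring
  -- now compute the evaluation
  have hev : ev p d m (IwNuProd p d σ n m) = ∑ g ∈ piS, MonoidAlgebra.single (Ψ g) (1 : ℤ_[p]) := by
    rw [IwNuProd, map_prod]
    have h1 : ∀ i, ev p d m (IwNu p d (σ i) n m)
        = ∑ j ∈ Finset.range (p ^ (m - n)),
            MonoidAlgebra.single (IwProj p d m (σ i) ^ (j * p ^ n)) (1 : ℤ_[p]) := by
      intro i
      rw [IwNu, map_sum]
      exact Finset.sum_congr rfl fun j _ => ev_IwOf_pow p d m (σ i) _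
    rw [Finset.prod_congr rfl fun i _ => h1 i, Finset.prod_univ_sum]
    refine Finset.sum_congr rfl fun g _ => ?_
    rw [MonoidAlgebra.prod_single, Finset.prod_const_one]
  rw [hev, ← himg, Finset.sum_image hinj]
end IwAux
namespace IwAux
variable (p d : ℕ) [Fact p.Prime]

lemma omegaSpan_le_J {c : ℕ} (τ : Fin c → IwGamma p d)
    (hτ1 : (Subgroup.closure (Set.range τ)).topologicalClosure = ⊤) (m : ℕ) :
    omegaSpan p d m ≤ IwJ p d τ m := by
  rw [omegaSpan, Ideal.span_le]
  rintro x ⟨g, rfl⟩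
  show IwOmega p d g m ∈ IwJ p d τ m
  exact mem_span_of_forall_mem_sup p d c _ _ (fun K => omega_mem_J_sup_I p d τ hτ1 g m K)

/-- The `ℤ_p`-span of the group-like elements. -/
def ofSpan : Submodule ℤ_[p] (IwAlg p d) := Submodule.span ℤ_[p] (Set.range (IwOf p d))

lemma mul_mem_ofSpan {x y : IwAlg p d} (hx : x ∈ ofSpan p d) (hy : y ∈ ofSpan p d) :
    x * y ∈ ofSpan p d := by
  have h := Submodule.mul_mem_mul hx hy
  rw [ofSpan, Submodule.span_mul_span] at h
  refine Submodule.span_le.mpr ?_ h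
  rintro z hz
  rw [Set.mem_mul] at hz
  obtain ⟨a, ⟨ga, rfl⟩, b, ⟨gb, rfl⟩, rfl⟩ := hz
  exact Submodule.subset_span ⟨ga * gb, map_mul (IwOf p d) ga gb⟩

lemma one_mem_ofSpan : (1 : IwAlg p d) ∈ ofSpan p d :=
  Submodule.subset_span ⟨1, map_one (IwOf p d)⟩

lemma nu_mem_ofSpan (g : IwGamma p d) (r m : ℕ) : IwNu p d g r m ∈ ofSpan p d :=
  Submodule.sum_mem _ fun j _ => by
    rw [IwOf_pow]
    exact Submodule.subset_span ⟨_, rfl⟩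

lemma nuProd_mem_ofSpan (σ : Fin d → IwGamma p d) (n m : ℕ) :
    IwNuProd p d σ n m ∈ ofSpan p d := by
  rw [IwNuProd]
  refine Finset.prod_induction _ (· ∈ ofSpan p d)
    (fun a b ha hb => mul_mem_ofSpan p d ha hb) (one_mem_ofSpan p d)
    (fun i _ => nu_mem_ofSpan p d (σ i) n m)

lemma mem_omegaSpan_of_ofSpan {m : ℕ} {z : IwAlg p d} (hz : z ∈ ofSpan p d)
    (hev : ev p d m z = 0) : z ∈ omegaSpan p d m := by
  obtain ⟨F, hF⟩ := Finsupp.mem_span_range_iff_exists_finsupp.mp hz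
  rw [← hF] at hev ⊢
  exact finsuppSum_mem_omegaSpan p d m F hev

lemma exists_basis_through {cc : ℕ} (τ : Fin cc → IwGamma p d) (i : Fin cc)
    (hτ2 : ¬∃ g : IwGamma p d, τ i = g ^ p) :
    ∃ (σ' : Fin d → IwGamma p d) (j0 : Fin d), IsIwBasis p d σ' ∧ σ' j0 = τ i := by
  set t : Fin d → ℤ_[p] := (τ i).toAdd with ht
  have hj : ∃ j, ¬ (p : ℤ_[p]) ∣ t j := by
    by_contra hcon
    push_neg at hcon
    choose u hu using fun j => hcon j
    refine hτ2 ⟨Multiplicative.ofAdd u, Multiplicative.toAdd.injective (funext fun j => ?_)⟩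
    rw [toAdd_pow]
    show t j = (p • fun j' => u j') j
    rw [Pi.smul_apply, nsmul_eq_mul, ← hu j]
  obtain ⟨j0, hj0⟩ := hj
  have hunit : IsUnit (t j0) := by
    rw [PadicInt.isUnit_iff]
    rcases lt_or_eq_of_le (PadicInt.norm_le_one (t j0)) with h | h
    · exact absurd ((PadicInt.norm_lt_one_iff_dvd _).mp h) hj0
    · exact h
  set A : Matrix (Fin d) (Fin d) ℤ_[p] :=
    (1 : Matrix (Fin d) (Fin d) ℤ_[p]).updateCol j0 t with hA
  have hdet : IsUnit A.det := by
    have h1 : A.det = Matrix.cramer (1 : Matrix (Fin d) (Fin d) ℤ_[p]) t j0 :=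
      (Matrix.cramer_apply _ _ _).symm
    rw [h1, Matrix.cramer_one]
    simpa using hunit
  set e := Matrix.toLinearEquiv (Pi.basisFun ℤ_[p] (Fin d)) A hdet with he
  set bb := (Pi.basisFun ℤ_[p] (Fin d)).map e with hbb
  have hbbj0 : bb j0 = t := by
    rw [hbb, Module.Basis.map_apply, he, Matrix.toLinearEquiv_apply]
    have h2 : Pi.basisFun ℤ_[p] (Fin d) j0 = Pi.single j0 1 := Pi.basisFun_apply _ _ _
    rw [h2]
    have h3 : (Matrix.toLin (Pi.basisFun ℤ_[p] (Fin d)) (Pi.basisFun ℤ_[p] (Fin d))) A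
        = Matrix.toLin' A := by
      rw [Matrix.toLin_eq_toLin']
    rw [h3, Matrix.toLin'_apply, Matrix.mulVec_single]
    funext r
    rw [hA]
    show (1 : Matrix (Fin d) (Fin d) ℤ_[p]).updateCol j0 t r j0 * 1 = t r
    rw [Matrix.updateCol_self, mul_one]
  refine ⟨fun j => Multiplicative.ofAdd (bb j), j0, ⟨bb, fun j => rfl⟩, ?_⟩
  show Multiplicative.ofAdd (bb j0) = τ i
  rw [hbbj0]
  rfl

end IwAux

/-- For a tight generating set `τ_1,…,τ_c`, a `ℤ_p`-basis `σ_1,…,σ_d` of `Γ`,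
`J_n = (ν_{τ_1,0,n},…,ν_{τ_c,0,n})` and `ν_{n,m} = Π_i ν_{σ_i,n,m}`, one has
`ν_{n,m}·J_n ⊆ J_m` for `m ≥ n`. -/
theorem nuProd_mul_J_subset
    (p d c : ℕ) [Fact p.Prime] (σ : Fin d → IwGamma p d) (hσ : IsIwBasis p d σ)
    (τ : Fin c → IwGamma p d) (hτ : IsTight p d τ)
    (n m : ℕ) (hnm : n ≤ m) :
    ∀ x ∈ IwJ p d τ n, IwNuProd p d σ n m * x ∈ IwJ p d τ m := by
  
  intro x hx
  rw [IwJ] at hx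
  induction hx using Submodule.span_induction with
  | mem y hy =>
      obtain ⟨i, rfl⟩ := hy
      obtain ⟨σ', j0, hσ', hj0⟩ := IwAux.exists_basis_through p d τ i (hτ.2.1 i)
      have hfac : IwNuProd p d σ' n m * IwNu p d (τ i) 0 n ∈ IwJ p d τ m := by
        rw [IwNuProd, ← Finset.mul_prod_erase Finset.univ
          (fun j => IwNu p d (σ' j) n m) (Finset.mem_univ j0), hj0, mul_right_comm,
          IwAux.nu_mul_nu p d (τ i) hnm]
        exact Ideal.mul_mem_right _ _ (Ideal.subset_span ⟨i, rfl⟩)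
      have hdiff : IwNuProd p d σ n m - IwNuProd p d σ' n m ∈ IwJ p d τ m := by
        apply IwAux.omegaSpan_le_J p d τ hτ.1 m
        apply IwAux.mem_omegaSpan_of_ofSpan
        · exact sub_mem (IwAux.nuProd_mem_ofSpan p d σ n m)
            (IwAux.nuProd_mem_ofSpan p d σ' n m)
        · rw [map_sub, IwAux.ev_nuProd p d σ hσ hnm, IwAux.ev_nuProd p d σ' hσ' hnm,
            sub_self]
      have hsplit : IwNuProd p d σ n m * IwNu p d (τ i) 0 n
          = (IwNuProd p d σ n m - IwNuProd p d σ' n m) * IwNu p d (τ i) 0 n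
            + IwNuProd p d σ' n m * IwNu p d (τ i) 0 n := by ring
      rw [hsplit]
      exact add_mem (Ideal.mul_mem_right _ _ hdiff) hfac
  | zero => rw [mul_zero]; exact zero_mem _
  | add a b ha hb iha ihb => rw [mul_add]; exact add_mem iha ihb
  | smul a y hy ihy =>
      rw [mul_smul_comm]
      exact Submodule.smul_mem _ a ihy
end
end

section
/- Let K/k be a ℤ_p^d-extension with Galois group Γ containing no nontrivial unramified subextension, L the maximal abelian unramified pro-p extension of K (so X_K = Gal(L/K)), and G = Gal(L/k). For each layer k_n, let J_n ⊂ X_K be the submodule generated by I_n·X_K and the 'x_g-components' of all conjugates of p^n-th powers of chosen inertia generators. Then the fixed field of the closed subgroup of G generated by J_n and the p^n-th powers of lifted basis elements is the maximal unramified abelian p-extension K_n of k_n, and X_K/J_n ≅ A_{k_n} as Λ-modules; moreover J_n is a Λ_Γ-submodule of X_K. -/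
open scoped Classical

set_option maxHeartbeats 1000000
set_option synthInstance.maxHeartbeats 400000

noncomputable section GaloisSetup

variable (p d : ℕ) [Fact p.Prime]

/-- `Γ^{pⁿ}`, the subgroup of `pⁿ`-th powers of `Γ = ℤ_p^d`. -/
def IwGammaPow (n : ℕ) : Subgroup (IwGamma p d) :=
  (powMonoidHom (p ^ n) : IwGamma p d →* IwGamma p d).range

variable {G : Type*} [Group G] [TopologicalSpace G] [IsTopologicalGroup G] [CompactSpace G]

/-- `G^{(n)} = Gal(L/k_n)`: the preimage of `Γ^{pⁿ}` under `π : G = Gal(L/k) → Γ`. -/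
def GaloisLayer (π : G →* IwGamma p d) (n : ℕ) : Subgroup G :=
  Subgroup.comap π (IwGammaPow p d n)

/-- The closed subgroup `Σ̃_n` topologically generated by `σ̃_1^{pⁿ}, …, σ̃_d^{pⁿ}`,
for lifts `σ̃_i ∈ G` of a basis of `Γ`. -/
def SigmaTilde (σt : Fin d → G) (n : ℕ) : Subgroup G :=
  (Subgroup.closure (Set.range fun i => σt i ^ p ^ n)).topologicalClosure

/-- `J_n ⊆ X_K`: the closed subgroup generated by `𝓘_n·X_K` (the commutators `[g, y]`,
`g ∈ G^{(n)}`, `y ∈ X_K`) together with the `x_g`-components (w.r.t. the decomposition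
`g = σ̃_{1,n}^{a_1}⋯σ̃_{d,n}^{a_d}·x_g`) of all conjugates of the `pⁿ`-th powers of the chosen
inertia generators `ξ̃_i^{(j)}`. -/
def JGroup (π : G →* IwGamma p d) (xg : ℕ → G → G) {s : ℕ} {dj : Fin s → ℕ}
    (ξ : ∀ j : Fin s, Fin (dj j) → G) (n : ℕ) : Subgroup G :=
  (Subgroup.closure
    ({x | ∃ g ∈ GaloisLayer p d π n, ∃ y ∈ π.ker, x = g * y * g⁻¹ * y⁻¹} ∪
      {x | ∃ (j : Fin s) (i : Fin (dj j)) (c : G),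
        x = xg n (c * (ξ j i) ^ p ^ n * c⁻¹)})).topologicalClosure

/-- The closed subgroup of `G^{(n)}` generated by all commutators of `G^{(n)}` and all
conjugates of the inertia generators of level `n` — by class field theory its fixed field is
the maximal unramified abelian `p`-extension `K_n` of `k_n`, so that the quotient is `A_{k_n}`. -/
def KTilde (π : G →* IwGamma p d) {s : ℕ} {dj : Fin s → ℕ}
    (ξ : ∀ j : Fin s, Fin (dj j) → G) (n : ℕ) : Subgroup G :=
  (Subgroup.closure
    ({x | ∃ g ∈ GaloisLayer p d π n, ∃ g' ∈ GaloisLayer p d π n, x = g * g' * g⁻¹ * g'⁻¹} ∪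
      {x | ∃ (j : Fin s) (i : Fin (dj j)) (c : G),
        x = c * (ξ j i) ^ p ^ n * c⁻¹})).topologicalClosure

end GaloisSetup

section AuxLemmas

open Multiplicative

private lemma aux_commute4 {H : Type*} [Group H] {A B C D : H}
    (hBC : Commute B C) (hBD : Commute B D) (hDA : Commute D A) :
    (A * B) * (C * D) * (A * B)⁻¹ * (C * D)⁻¹ = A * C * A⁻¹ * C⁻¹ := by
  have h1 : Commute B (C * D) := hBC.mul_right hBD
  have h2 : Commute D A⁻¹ := hDA.inv_right
  calc (A * B) * (C * D) * (A * B)⁻¹ * (C * D)⁻¹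
      = A * (B * (C * D)) * B⁻¹ * A⁻¹ * (C * D)⁻¹ := by group
    _ = A * ((C * D) * B) * B⁻¹ * A⁻¹ * (C * D)⁻¹ := by rw [h1.eq]
    _ = A * C * (D * A⁻¹) * D⁻¹ * C⁻¹ := by group
    _ = A * C * (A⁻¹ * D) * D⁻¹ * C⁻¹ := by rw [h2.eq]
    _ = A * C * A⁻¹ * C⁻¹ := by group

private lemma aux_mem_iwGammaPow {p d : ℕ} [Fact p.Prime] {n : ℕ} {x : IwGamma p d} :
    x ∈ IwGammaPow p d n ↔ ∀ i, (p : ℤ_[p]) ^ n ∣ Multiplicative.toAdd x i := by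
  constructor
  · rintro ⟨y, rfl⟩ i
    refine ⟨Multiplicative.toAdd y i, ?_⟩
    show Multiplicative.toAdd ((powMonoidHom (p ^ n) : IwGamma p d →* IwGamma p d) y) i = _
    rw [powMonoidHom_apply, toAdd_pow]
    simp [nsmul_eq_mul]
  · intro h
    refine ⟨Multiplicative.ofAdd (fun i => ((h i).choose)), ?_⟩
    have : ∀ i, Multiplicative.toAdd x i = (p : ℤ_[p]) ^ n * (h i).choose :=
      fun i => (h i).choose_spec
    apply Multiplicative.toAdd.injective
    funext i
    rw [powMonoidHom_apply, toAdd_pow]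
    simp only [Pi.smul_apply, toAdd_ofAdd, nsmul_eq_mul]
    rw [Nat.cast_pow]
    exact (this i).symm

private lemma aux_isClosed_iwGammaPow (p d : ℕ) [Fact p.Prime] (n : ℕ) :
    IsClosed ((IwGammaPow p d n : Subgroup (IwGamma p d)) : Set (IwGamma p d)) := by
  have hset : ((IwGammaPow p d n : Subgroup (IwGamma p d)) : Set (IwGamma p d)) =
      ⋂ i : Fin d, {x : IwGamma p d |
        ‖Multiplicative.toAdd x i‖ ≤ (p : ℝ) ^ (-(n : ℤ))} := by
    ext x
    simp only [Set.mem_iInter, Set.mem_setOf_eq, SetLike.mem_coe]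
    rw [aux_mem_iwGammaPow]
    refine forall_congr' fun i => ?_
    rw [PadicInt.norm_le_pow_iff_mem_span_pow, Ideal.mem_span_singleton]
  rw [hset]
  refine isClosed_iInter fun i => ?_
  have hc : Continuous fun x : IwGamma p d => ‖Multiplicative.toAdd x i‖ :=
    continuous_norm.comp ((continuous_apply i).comp continuous_toAdd)
  exact isClosed_le hc continuous_const

end AuxLemmas

/-- **Lemma `l:yn`.** Let `K/k` be a `ℤ_p^d`-extension with group `Γ`
containing no nontrivial unramified subextension, `L` the maximal abelian unramified pro-`p`
extension of `K`, `X_K = Gal(L/K)`, `G = Gal(L/k)`, `π : G → Γ`.  With `J_n ⊆ X_K` the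
submodule generated by `𝓘_n·X_K` and the `x_g`-components of all conjugates of `pⁿ`-th powers
of the chosen inertia generators `ξ̃_i^{(j)}`:  the closed subgroup of `G` generated by `J_n`
and the `pⁿ`-th powers of the lifted basis elements `σ̃_i` equals the closed subgroup `J̃_n`
generated by all commutators and all inertia subgroups of `G^{(n)}` — whose fixed field is the
maximal unramified abelian `p`-extension `K_n` of `k_n`, so that `G^{(n)}/J̃_n = A_{k_n}` by
class field theory; the inclusion `X_K ⊆ G^{(n)}` induces an isomorphism
`X_K/J_n ≅ G^{(n)}/J̃_n = A_{k_n}`; and `J_n` is stable under conjugation by `G`, i.e. is a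
`Λ_Γ`-submodule of `X_K`. -/
theorem fixed_field_of_Jn_and_quotient_isom
    (p d : ℕ) [Fact p.Prime]
    (G : Type) [Group G] [TopologicalSpace G] [IsTopologicalGroup G] [CompactSpace G]
    (π : G →* IwGamma p d) (hπ : Function.Surjective π) (hπc : Continuous π)
    -- `X_K = ker π = Gal(L/K)` is abelian
    (hab : ∀ x ∈ π.ker, ∀ y ∈ π.ker, x * y = y * x)
    -- lifts `σ̃_i ∈ G` of a `ℤ_p`-basis of `Γ`
    (σ : Fin d → IwGamma p d) (hσ : IsIwBasis p d σ)
    (σt : Fin d → G) (hσt : ∀ i, π (σt i) = σ i)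
    -- chosen generators `ξ̃_i^{(j)}` of the inertia subgroups `G_{u_j}^0` at the ramified
    -- places; their images topologically generate `Γ` (no unramified subextension)
    (s : ℕ) (dj : Fin s → ℕ) (ξ : ∀ j : Fin s, Fin (dj j) → G)
    (htopgen : (Subgroup.closure
      (Set.range fun ji : Σ j : Fin s, Fin (dj j) => π (ξ ji.1 ji.2))).topologicalClosure = ⊤)
    (hσt_inertia : ∀ i, ∃ (j : Fin s) (i' : Fin (dj j)), σt i = ξ j i')
    -- the unique decomposition `g = σ̃_{1,n}^{a_1}⋯σ̃_{d,n}^{a_d}·x_g` on `G^{(n)}`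
    (xg : ℕ → G → G)
    (hdecomp : ∀ (n : ℕ) (g : G), g ∈ GaloisLayer p d π n →
      xg n g ∈ π.ker ∧ g * (xg n g)⁻¹ ∈ SigmaTilde p d σt n ∧
        ∀ y ∈ π.ker, g * y⁻¹ ∈ SigmaTilde p d σt n → y = xg n g)
    (n : ℕ) :
    -- the closed subgroup generated by `J_n` and the `σ̃_i^{pⁿ}` is `J̃_n`, the closed
    -- subgroup generated by all commutators and all inertia subgroups of `G^{(n)}` (whose
    -- fixed field is `K_n`, the maximal unramified abelian `p`-extension of `k_n`)
    ((Subgroup.closure ((JGroup p d π xg ξ n : Set G) ∪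
        Set.range fun i => σt i ^ p ^ n)).topologicalClosure = KTilde p d π ξ n) ∧
      -- `X_K/J_n ≅ G^{(n)}/J̃_n = Gal(K_n/k_n) = A_{k_n}`:
      (∀ g ∈ GaloisLayer p d π n, ∃ x ∈ π.ker, g⁻¹ * x ∈ KTilde p d π ξ n) ∧
      (∀ x ∈ π.ker, (x ∈ KTilde p d π ξ n ↔ x ∈ JGroup p d π xg ξ n)) ∧
      -- `J_n` is a `Λ_Γ`-submodule of `X_K`:
      ∀ (g : G), ∀ x ∈ JGroup p d π xg ξ n, g * x * g⁻¹ ∈ JGroup p d π xg ξ n := by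
  
  classical
  -- generating sets
  set S1 : Set G := {x | ∃ g ∈ GaloisLayer p d π n, ∃ y ∈ π.ker, x = g * y * g⁻¹ * y⁻¹}
    with hS1def
  set S2 : Set G := {x | ∃ (j : Fin s) (i : Fin (dj j)) (c : G),
      x = xg n (c * (ξ j i) ^ p ^ n * c⁻¹)} with hS2def
  set C1 : Set G := {x | ∃ g ∈ GaloisLayer p d π n, ∃ g' ∈ GaloisLayer p d π n,
      x = g * g' * g⁻¹ * g'⁻¹} with hC1def
  set C2 : Set G := {x | ∃ (j : Fin s) (i : Fin (dj j)) (c : G),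
      x = c * (ξ j i) ^ p ^ n * c⁻¹} with hC2def
  have hJ_eq : JGroup p d π xg ξ n = (Subgroup.closure (S1 ∪ S2)).topologicalClosure := rfl
  have hKT_eq : KTilde p d π ξ n = (Subgroup.closure (C1 ∪ C2)).topologicalClosure := rfl
  -- basic topology of the target
  haveI : T2Space (IwGamma p d) := inferInstanceAs (T2Space (Fin d → ℤ_[p]))
  have hXclosed : IsClosed ((π.ker : Subgroup G) : Set G) := by
    have h : ((π.ker : Subgroup G) : Set G) = π ⁻¹' {1} := by
      ext a; simp [MonoidHom.mem_ker]
    rw [h]; exact isClosed_singleton.preimage hπc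
  have hNclosed : IsClosed ((GaloisLayer p d π n : Subgroup G) : Set G) := by
    have h : ((GaloisLayer p d π n : Subgroup G) : Set G)
        = π ⁻¹' ((IwGammaPow p d n : Subgroup (IwGamma p d)) : Set (IwGamma p d)) := rfl
    rw [h]; exact (aux_isClosed_iwGammaPow p d n).preimage hπc
  -- basic memberships
  have hXN : π.ker ≤ GaloisLayer p d π n := by
    intro x hx
    rw [MonoidHom.mem_ker] at hx
    show π x ∈ IwGammaPow p d n
    rw [hx]; exact one_mem _
  have hker_conj : ∀ (g y : G), y ∈ π.ker → g * y * g⁻¹ ∈ π.ker := by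
    intro g y hy
    rw [MonoidHom.mem_ker] at hy ⊢
    rw [map_mul, map_mul, map_inv, hy, mul_one, mul_inv_cancel]
  have hNconj : ∀ (g a : G), a ∈ GaloisLayer p d π n → g * a * g⁻¹ ∈ GaloisLayer p d π n := by
    intro g a ha
    show π (g * a * g⁻¹) ∈ IwGammaPow p d n
    have h : π (g * a * g⁻¹) = π a := by
      rw [map_mul, map_mul, map_inv, mul_comm (π g) (π a), mul_assoc, mul_inv_cancel, mul_one]
    rw [h]; exact ha
  have hσtSg : ∀ i : Fin d, σt i ^ p ^ n ∈ SigmaTilde p d σt n := fun i =>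
    Subgroup.le_topologicalClosure _ (Subgroup.subset_closure ⟨i, rfl⟩)
  have hSgN : SigmaTilde p d σt n ≤ GaloisLayer p d π n := by
    refine Subgroup.topologicalClosure_minimal _ ((Subgroup.closure_le _).mpr ?_) hNclosed
    rintro x ⟨i, rfl⟩
    show π (σt i ^ p ^ n) ∈ IwGammaPow p d n
    exact ⟨σ i, by rw [powMonoidHom_apply, map_pow, hσt]⟩
  have hSgclosed : IsClosed ((SigmaTilde p d σt n : Subgroup G) : Set G) :=
    Subgroup.isClosed_topologicalClosure _
  have hSgXtriv : ∀ z ∈ SigmaTilde p d σt n, z ∈ π.ker → z = 1 := by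
    intro z hzS hzX
    obtain ⟨-, -, huniq⟩ := hdecomp n z (hSgN hzS)
    have h1 : (1 : G) = xg n z := huniq 1 (one_mem _) (by rwa [inv_one, mul_one])
    have h2 : z = xg n z := huniq z hzX (by rw [mul_inv_cancel]; exact one_mem _)
    rw [h2, ← h1]
  -- Hausdorffness of G
  have h1closed : IsClosed ({1} : Set G) := by
    have hsub : closure ({1} : Set G) ⊆
        ((SigmaTilde p d σt n : Subgroup G) : Set G) ∩ ((π.ker : Subgroup G) : Set G) := by
      refine closure_minimal ?_ (hSgclosed.inter hXclosed)
      intro x hx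
      rw [Set.mem_singleton_iff] at hx
      subst hx
      exact ⟨one_mem _, one_mem _⟩
    have h2 : closure ({1} : Set G) ⊆ {1} := fun x hx =>
      Set.mem_singleton_iff.mpr (hSgXtriv x (hsub hx).1 (hsub hx).2)
    exact isClosed_of_closure_subset h2
  haveI : T1Space G := IsTopologicalGroup.t1Space G h1closed
  haveI : T2Space G := IsTopologicalGroup.t2Space_iff_one_closed.mpr h1closed
  -- the canonical decomposition
  have hxg_mul : ∀ t ∈ SigmaTilde p d σt n, ∀ y ∈ π.ker, xg n (t * y) = y := by
    intro t ht y hy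
    obtain ⟨-, -, huniq⟩ := hdecomp n (t * y) (mul_mem (hSgN ht) (hXN hy))
    exact (huniq y hy (by rwa [mul_inv_cancel_right])).symm
  have hxg_ker : ∀ y ∈ π.ker, xg n y = y := by
    intro y hy
    have h := hxg_mul 1 (one_mem _) y hy
    rwa [one_mul] at h
  -- generators live where they should
  have hinertiaN : ∀ (j : Fin s) (i : Fin (dj j)) (c : G),
      c * (ξ j i) ^ p ^ n * c⁻¹ ∈ GaloisLayer p d π n := by
    intro j i c
    show π (c * (ξ j i) ^ p ^ n * c⁻¹) ∈ IwGammaPow p d n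
    refine ⟨π (ξ j i), ?_⟩
    rw [powMonoidHom_apply, map_mul, map_mul, map_inv, map_pow,
      mul_comm (π c), mul_assoc, mul_inv_cancel, mul_one]
  have hS1X : S1 ⊆ ((π.ker : Subgroup G) : Set G) := by
    rintro x ⟨a, _, y, hy, rfl⟩
    rw [MonoidHom.mem_ker] at hy
    show a * y * a⁻¹ * y⁻¹ ∈ π.ker
    rw [MonoidHom.mem_ker, map_mul, map_mul, map_mul, map_inv, map_inv, hy]
    group
  have hS2X : S2 ⊆ ((π.ker : Subgroup G) : Set G) := by
    rintro x ⟨j, i, c, rfl⟩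
    exact (hdecomp n _ (hinertiaN j i c)).1
  have hJX : JGroup p d π xg ξ n ≤ π.ker := by
    rw [hJ_eq]
    exact Subgroup.topologicalClosure_minimal _
      ((Subgroup.closure_le _).mpr (Set.union_subset hS1X hS2X)) hXclosed
  have hJclosed : IsClosed ((JGroup p d π xg ξ n : Subgroup G) : Set G) := by
    rw [hJ_eq]; exact Subgroup.isClosed_topologicalClosure _
  have hKTclosed : IsClosed ((KTilde p d π ξ n : Subgroup G) : Set G) := by
    rw [hKT_eq]; exact Subgroup.isClosed_topologicalClosure _
  have hS1J : S1 ⊆ ((JGroup p d π xg ξ n : Subgroup G) : Set G) := by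
    intro x hx
    rw [hJ_eq]
    exact Subgroup.le_topologicalClosure _ (Subgroup.subset_closure (Or.inl hx))
  have hS2J : S2 ⊆ ((JGroup p d π xg ξ n : Subgroup G) : Set G) := by
    intro x hx
    rw [hJ_eq]
    exact Subgroup.le_topologicalClosure _ (Subgroup.subset_closure (Or.inr hx))
  have hS1mem : ∀ (a : G), a ∈ GaloisLayer p d π n → ∀ (y : G), y ∈ π.ker →
      a * y * a⁻¹ * y⁻¹ ∈ JGroup p d π xg ξ n := fun a ha y hy => hS1J ⟨a, ha, y, hy, rfl⟩
  have hC2KT : ∀ (j : Fin s) (i : Fin (dj j)) (c : G),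
      c * (ξ j i) ^ p ^ n * c⁻¹ ∈ KTilde p d π ξ n := by
    intro j i c
    rw [hKT_eq]
    exact Subgroup.le_topologicalClosure _ (Subgroup.subset_closure (Or.inr ⟨j, i, c, rfl⟩))
  have hC1KT : ∀ a ∈ GaloisLayer p d π n, ∀ b ∈ GaloisLayer p d π n,
      a * b * a⁻¹ * b⁻¹ ∈ KTilde p d π ξ n := by
    intro a ha b hb
    rw [hKT_eq]
    exact Subgroup.le_topologicalClosure _ (Subgroup.subset_closure (Or.inl ⟨a, ha, b, hb, rfl⟩))
  have hσtKT : ∀ i : Fin d, σt i ^ p ^ n ∈ KTilde p d π ξ n := by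
    intro i
    obtain ⟨j, i', hji⟩ := hσt_inertia i
    have h : σt i ^ p ^ n = 1 * (ξ j i') ^ p ^ n * 1⁻¹ := by rw [hji]; group
    rw [h]
    exact hC2KT j i' 1
  have hSgKT : SigmaTilde p d σt n ≤ KTilde p d π ξ n := by
    refine Subgroup.topologicalClosure_minimal _ ((Subgroup.closure_le _).mpr ?_) hKTclosed
    rintro x ⟨i, rfl⟩
    exact hσtKT i
  have hJKT : JGroup p d π xg ξ n ≤ KTilde p d π ξ n := by
    rw [hJ_eq]
    refine Subgroup.topologicalClosure_minimal _ ((Subgroup.closure_le _).mpr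
      (Set.union_subset ?_ ?_)) hKTclosed
    · rintro x ⟨a, ha, y, hy, rfl⟩
      exact hC1KT a ha y (hXN hy)
    · rintro x ⟨j, i, c, rfl⟩
      obtain ⟨hx1, hx2, -⟩ := hdecomp n _ (hinertiaN j i c)
      have h : xg n (c * (ξ j i) ^ p ^ n * c⁻¹)
          = (c * (ξ j i) ^ p ^ n * c⁻¹ * (xg n (c * (ξ j i) ^ p ^ n * c⁻¹))⁻¹)⁻¹
            * (c * (ξ j i) ^ p ^ n * c⁻¹) := by group
      show xg n (c * (ξ j i) ^ p ^ n * c⁻¹) ∈ KTilde p d π ξ n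
      rw [h]
      exact mul_mem (inv_mem (hSgKT hx2)) (hC2KT j i c)
  -- compactness machinery: continuity of the x-component on the layer
  have hNcompact : IsCompact ((GaloisLayer p d π n : Subgroup G) : Set G) := hNclosed.isCompact
  haveI : CompactSpace ((GaloisLayer p d π n : Subgroup G) : Set G) :=
    isCompact_iff_compactSpace.mp hNcompact
  haveI : CompactSpace ((SigmaTilde p d σt n : Subgroup G) : Set G) :=
    isCompact_iff_compactSpace.mp hSgclosed.isCompact
  haveI : CompactSpace ((π.ker : Subgroup G) : Set G) :=
    isCompact_iff_compactSpace.mp hXclosed.isCompact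
  let e : ((SigmaTilde p d σt n : Subgroup G) : Set G) × ((π.ker : Subgroup G) : Set G) ≃
      ((GaloisLayer p d π n : Subgroup G) : Set G) :=
    { toFun := fun t => ⟨(t.1 : G) * (t.2 : G), mul_mem (hSgN t.1.2) (hXN t.2.2)⟩
      invFun := fun a => (⟨(a : G) * (xg n a)⁻¹, (hdecomp n a a.2).2.1⟩,
        ⟨xg n a, (hdecomp n a a.2).1⟩)
      left_inv := by
        rintro ⟨⟨t, ht⟩, ⟨y, hy⟩⟩
        have h := hxg_mul t ht y hy
        refine Prod.ext (Subtype.ext ?_) (Subtype.ext ?_)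
        · show t * y * (xg n (t * y))⁻¹ = t
          rw [h, mul_inv_cancel_right]
        · exact h
      right_inv := by
        rintro ⟨a, ha⟩
        refine Subtype.ext ?_
        show a * (xg n a)⁻¹ * xg n a = a
        rw [inv_mul_cancel_right] }
  have he_cont : Continuous e := by
    refine Continuous.subtype_mk ?_ _
    exact (continuous_subtype_val.comp continuous_fst).mul
      (continuous_subtype_val.comp continuous_snd)
  let eh := he_cont.homeoOfEquivCompactToT2
  have hxg_cont : Continuous (fun a : ((GaloisLayer p d π n : Subgroup G) : Set G) =>
      xg n (a : G)) := by
    have hfe : (fun a : ((GaloisLayer p d π n : Subgroup G) : Set G) => xg n (a : G))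
        = fun a => (((eh.symm a).2 : G)) := rfl
    rw [hfe]
    exact continuous_subtype_val.comp (continuous_snd.comp eh.symm.continuous)
  -- the subgroup V = { a ∈ G⁽ⁿ⁾ | x_a ∈ J }
  have hVclosed : IsClosed
      {a : G | a ∈ GaloisLayer p d π n ∧ xg n a ∈ JGroup p d π xg ξ n} := by
    have himg : {a : G | a ∈ GaloisLayer p d π n ∧ xg n a ∈ JGroup p d π xg ξ n}
        = Subtype.val '' ((fun a : ((GaloisLayer p d π n : Subgroup G) : Set G) => xg n (a : G))
          ⁻¹' ((JGroup p d π xg ξ n : Subgroup G) : Set G)) := by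
      ext a
      constructor
      · rintro ⟨haN, haJ⟩; exact ⟨⟨a, haN⟩, haJ, rfl⟩
      · rintro ⟨b, hbJ, rfl⟩; exact ⟨b.2, hbJ⟩
    rw [himg]
    exact (((hJclosed.preimage hxg_cont).isCompact).image continuous_subtype_val).isClosed
  let V : Subgroup G :=
    { carrier := {a : G | a ∈ GaloisLayer p d π n ∧ xg n a ∈ JGroup p d π xg ξ n}
      one_mem' := ⟨one_mem _, by rw [hxg_ker 1 (one_mem _)]; exact one_mem _⟩
      mul_mem' := by
        rintro a b ⟨haN, haJ⟩ ⟨hbN, hbJ⟩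
        obtain ⟨hya, hta, -⟩ := hdecomp n a haN
        obtain ⟨hyb, htb, -⟩ := hdecomp n b hbN
        refine ⟨mul_mem haN hbN, ?_⟩
        have hy' : (b * (xg n b)⁻¹)⁻¹ * xg n a * (b * (xg n b)⁻¹) ∈ π.ker := by
          have h := hker_conj (b * (xg n b)⁻¹)⁻¹ (xg n a) hya
          rwa [inv_inv] at h
        have hab' : a * b = ((a * (xg n a)⁻¹) * (b * (xg n b)⁻¹)) *
            (((b * (xg n b)⁻¹)⁻¹ * xg n a * (b * (xg n b)⁻¹)) * xg n b) := by group
        have hxab : xg n (a * b)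
            = ((b * (xg n b)⁻¹)⁻¹ * xg n a * (b * (xg n b)⁻¹)) * xg n b := by
          rw [hab']
          exact hxg_mul _ (mul_mem hta htb) _ (mul_mem hy' hyb)
        rw [hxab]
        have hcomm : (b * (xg n b)⁻¹)⁻¹ * xg n a * (b * (xg n b)⁻¹)
            = ((b * (xg n b)⁻¹)⁻¹ * xg n a * ((b * (xg n b)⁻¹)⁻¹)⁻¹ * (xg n a)⁻¹)
              * xg n a := by group
        rw [hcomm]
        exact mul_mem (mul_mem (hS1mem _ (inv_mem (hSgN htb)) _ hya) haJ) hbJ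
      inv_mem' := by
        rintro a ⟨haN, haJ⟩
        obtain ⟨hya, hta, -⟩ := hdecomp n a haN
        refine ⟨inv_mem haN, ?_⟩
        have hy' : (a * (xg n a)⁻¹) * (xg n a)⁻¹ * (a * (xg n a)⁻¹)⁻¹ ∈ π.ker :=
          hker_conj _ _ (inv_mem hya)
        have hainv : a⁻¹ = (a * (xg n a)⁻¹)⁻¹ *
            ((a * (xg n a)⁻¹) * (xg n a)⁻¹ * (a * (xg n a)⁻¹)⁻¹) := by group
        have hxainv : xg n a⁻¹ = (a * (xg n a)⁻¹) * (xg n a)⁻¹ * (a * (xg n a)⁻¹)⁻¹ := by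
          rw [hainv]
          exact hxg_mul _ (inv_mem hta) _ hy'
        rw [hxainv]
        have hc : (a * (xg n a)⁻¹) * (xg n a)⁻¹ * (a * (xg n a)⁻¹)⁻¹
            = ((a * (xg n a)⁻¹) * (xg n a)⁻¹ * (a * (xg n a)⁻¹)⁻¹ * ((xg n a)⁻¹)⁻¹)
              * (xg n a)⁻¹ := by group
        rw [hc]
        exact mul_mem (hS1mem _ (hSgN hta) _ (inv_mem hya)) (inv_mem haJ) }
  have hVcoe : (V : Set G) = {a : G | a ∈ GaloisLayer p d π n ∧ xg n a ∈ JGroup p d π xg ξ n} :=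
    rfl
  have hVker : ∀ x ∈ π.ker, x ∈ V → x ∈ JGroup p d π xg ξ n := by
    intro x hx hxV
    have h := hxV.2
    rwa [hxg_ker x hx] at h
  -- Lemma B : conjugates of Σ̃ₙ-elements have x-component in J
  have hconjSgV : ∀ (g : G), ∀ u ∈ SigmaTilde p d σt n, g * u * g⁻¹ ∈ V := by
    intro g
    have hcomapc : IsClosed ((V.comap (MulAut.conj g).toMonoidHom : Subgroup G) : Set G) := by
      have h : ((V.comap (MulAut.conj g).toMonoidHom : Subgroup G) : Set G)
          = (fun x : G => g * x * g⁻¹) ⁻¹' (V : Set G) := by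
        ext z
        simp only [SetLike.mem_coe, Subgroup.mem_comap, Set.mem_preimage]
        rfl
      rw [h]
      exact (hVcoe ▸ hVclosed).preimage ((continuous_mul_left g).mul continuous_const)
    have hle : SigmaTilde p d σt n ≤ V.comap (MulAut.conj g).toMonoidHom := by
      refine Subgroup.topologicalClosure_minimal _ ((Subgroup.closure_le _).mpr ?_) hcomapc
      rintro x ⟨i, rfl⟩
      simp only [SetLike.mem_coe, Subgroup.mem_comap]
      show g * σt i ^ p ^ n * g⁻¹ ∈ V
      obtain ⟨j, i', hji⟩ := hσt_inertia i
      rw [hji]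
      exact ⟨hinertiaN j i' g, hS2J ⟨j, i', g, rfl⟩⟩
    intro u hu
    have h := Subgroup.mem_comap.mp (hle hu)
    exact h
  -- Part 4 : J is stable under conjugation
  have part4 : ∀ (g : G), ∀ x ∈ JGroup p d π xg ξ n, g * x * g⁻¹ ∈ JGroup p d π xg ξ n := by
    intro g x hx
    have hcomapc : IsClosed (((JGroup p d π xg ξ n).comap
        (MulAut.conj g).toMonoidHom : Subgroup G) : Set G) := by
      have h : (((JGroup p d π xg ξ n).comap (MulAut.conj g).toMonoidHom : Subgroup G) : Set G)
          = (fun x : G => g * x * g⁻¹) ⁻¹' ((JGroup p d π xg ξ n : Subgroup G) : Set G) := by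
        ext z
        simp only [SetLike.mem_coe, Subgroup.mem_comap, Set.mem_preimage]
        rfl
      rw [h]
      exact hJclosed.preimage ((continuous_mul_left g).mul continuous_const)
    have hstep : (Subgroup.closure (S1 ∪ S2)).topologicalClosure ≤
        (JGroup p d π xg ξ n).comap (MulAut.conj g).toMonoidHom := by
      refine Subgroup.topologicalClosure_minimal _ ((Subgroup.closure_le _).mpr ?_) hcomapc
      rintro z (⟨a, ha, y, hy, rfl⟩ | ⟨j, i, c, rfl⟩)
      · simp only [SetLike.mem_coe, Subgroup.mem_comap]
        show g * (a * y * a⁻¹ * y⁻¹) * g⁻¹ ∈ JGroup p d π xg ξ n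
        have hform : g * (a * y * a⁻¹ * y⁻¹) * g⁻¹
            = (g * a * g⁻¹) * (g * y * g⁻¹) * (g * a * g⁻¹)⁻¹ * (g * y * g⁻¹)⁻¹ := by group
        rw [hform]
        exact hS1mem _ (hNconj g a ha) _ (hker_conj g y hy)
      · simp only [SetLike.mem_coe, Subgroup.mem_comap]
        show g * xg n (c * (ξ j i) ^ p ^ n * c⁻¹) * g⁻¹ ∈ JGroup p d π xg ξ n
        obtain ⟨hxk, hsS, -⟩ := hdecomp n _ (hinertiaN j i c)
        have hb1 : g * (c * (ξ j i) ^ p ^ n * c⁻¹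
            * (xg n (c * (ξ j i) ^ p ^ n * c⁻¹))⁻¹)⁻¹ * g⁻¹ ∈ V :=
          hconjSgV g _ (inv_mem hsS)
        have hb2 : g * (c * (ξ j i) ^ p ^ n * c⁻¹) * g⁻¹ ∈ V := by
          refine ⟨hNconj g _ (hinertiaN j i c), ?_⟩
          have hform2 : g * (c * (ξ j i) ^ p ^ n * c⁻¹) * g⁻¹
              = (g * c) * (ξ j i) ^ p ^ n * (g * c)⁻¹ := by group
          rw [hform2]
          exact hS2J ⟨j, i, g * c, rfl⟩
        have hprod := mul_mem hb1 hb2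
        have hform3 : (g * (c * (ξ j i) ^ p ^ n * c⁻¹
              * (xg n (c * (ξ j i) ^ p ^ n * c⁻¹))⁻¹)⁻¹ * g⁻¹)
            * (g * (c * (ξ j i) ^ p ^ n * c⁻¹) * g⁻¹)
            = g * xg n (c * (ξ j i) ^ p ^ n * c⁻¹) * g⁻¹ := by group
        rw [hform3] at hprod
        exact hVker _ (hker_conj g _ hxk) hprod
    have hle := le_trans (le_of_eq hJ_eq) hstep
    exact Subgroup.mem_comap.mp (hle hx)
  -- the subgroup M generated by J and the σ̃ᵢ^{pⁿ}
  have hMclosed : IsClosed (((Subgroup.closure ((JGroup p d π xg ξ n : Set G) ∪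
      Set.range fun i => σt i ^ p ^ n)).topologicalClosure : Subgroup G) : Set G) :=
    Subgroup.isClosed_topologicalClosure _
  have hM_le_KT : (Subgroup.closure ((JGroup p d π xg ξ n : Set G) ∪
      Set.range fun i => σt i ^ p ^ n)).topologicalClosure ≤ KTilde p d π ξ n := by
    refine Subgroup.topologicalClosure_minimal _ ((Subgroup.closure_le _).mpr
      (Set.union_subset ?_ ?_)) hKTclosed
    · exact fun z hz => hJKT hz
    · rintro z ⟨i, rfl⟩
      exact hσtKT i
  have hJ_le_M : JGroup p d π xg ξ n ≤ (Subgroup.closure ((JGroup p d π xg ξ n : Set G) ∪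
      Set.range fun i => σt i ^ p ^ n)).topologicalClosure :=
    fun z hz => Subgroup.le_topologicalClosure _ (Subgroup.subset_closure (Or.inl hz))
  have hSg_le_M : SigmaTilde p d σt n ≤ (Subgroup.closure ((JGroup p d π xg ξ n : Set G) ∪
      Set.range fun i => σt i ^ p ^ n)).topologicalClosure := by
    refine Subgroup.topologicalClosure_minimal _ ((Subgroup.closure_le _).mpr ?_) hMclosed
    rintro x ⟨i, rfl⟩
    exact Subgroup.le_topologicalClosure _ (Subgroup.subset_closure (Or.inr ⟨i, rfl⟩))
  -- commutators of the layer are in M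
  have hP : ∀ a ∈ GaloisLayer p d π n, ∀ b ∈ GaloisLayer p d π n,
      a * b * a⁻¹ * b⁻¹ ∈ (Subgroup.closure ((JGroup p d π xg ξ n : Set G) ∪
        Set.range fun i => σt i ^ p ^ n)).topologicalClosure := by
    intro a ha b hb
    have hPnormal : (Subgroup.closure S1).Normal := by
      constructor
      intro z hz g
      refine Subgroup.closure_induction ?_ ?_ ?_ ?_ hz
      · rintro w ⟨a', ha', y, hy, rfl⟩
        refine Subgroup.subset_closure
          ⟨g * a' * g⁻¹, hNconj g a' ha', g * y * g⁻¹, hker_conj g y hy, ?_⟩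
        group
      · have h : g * 1 * g⁻¹ = 1 := by group
        rw [h]; exact one_mem _
      · intro u v _ _ ihu ihv
        have h : g * (u * v) * g⁻¹ = (g * u * g⁻¹) * (g * v * g⁻¹) := by group
        rw [h]; exact mul_mem ihu ihv
      · intro u _ ihu
        have h : g * u⁻¹ * g⁻¹ = (g * u * g⁻¹)⁻¹ := by group
        rw [h]; exact inv_mem ihu
    haveI := hPnormal
    set q := QuotientGroup.mk' (Subgroup.closure S1) with hqdef
    have hcommNX : ∀ u ∈ GaloisLayer p d π n, ∀ y ∈ π.ker, Commute (q u) (q y) := by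
      intro u hu y hy
      have h1 : q (u * y * u⁻¹ * y⁻¹) = 1 :=
        (QuotientGroup.eq_one_iff _).mpr (Subgroup.subset_closure ⟨u, hu, y, hy, rfl⟩)
      have h2 : q u * q y * (q u)⁻¹ * (q y)⁻¹ = 1 := by
        simp only [← map_inv, ← map_mul]
        exact h1
      exact commutatorElement_eq_one_iff_commute.mp h2
    obtain ⟨hya, hta, -⟩ := hdecomp n a ha
    obtain ⟨hyb, htb, -⟩ := hdecomp n b hb
    have hAB : q a = q (a * (xg n a)⁻¹) * q (xg n a) := by
      rw [← map_mul, inv_mul_cancel_right]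
    have hCD : q b = q (b * (xg n b)⁻¹) * q (xg n b) := by
      rw [← map_mul, inv_mul_cancel_right]
    have hBC : Commute (q (xg n a)) (q (b * (xg n b)⁻¹)) :=
      (hcommNX _ (hSgN htb) _ hya).symm
    have hBD0 : Commute (xg n a) (xg n b) := hab _ hya _ hyb
    have hBD : Commute (q (xg n a)) (q (xg n b)) := hBD0.map q
    have hDA : Commute (q (xg n b)) (q (a * (xg n a)⁻¹)) :=
      (hcommNX _ (hSgN hta) _ hyb).symm
    have hkey : q (a * b * a⁻¹ * b⁻¹)
        = q ((a * (xg n a)⁻¹) * (b * (xg n b)⁻¹) * (a * (xg n a)⁻¹)⁻¹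
            * (b * (xg n b)⁻¹)⁻¹) := by
      have e1 : q (a * b * a⁻¹ * b⁻¹) = q a * q b * (q a)⁻¹ * (q b)⁻¹ := by
        simp only [map_mul, map_inv]
      have e2 : q ((a * (xg n a)⁻¹) * (b * (xg n b)⁻¹) * (a * (xg n a)⁻¹)⁻¹
            * (b * (xg n b)⁻¹)⁻¹)
          = q (a * (xg n a)⁻¹) * q (b * (xg n b)⁻¹) * (q (a * (xg n a)⁻¹))⁻¹
            * (q (b * (xg n b)⁻¹))⁻¹ := by
        simp only [map_mul, map_inv]
      rw [e1, e2, hAB, hCD]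
      exact aux_commute4 hBC hBD hDA
    obtain ⟨z, hzP, hz⟩ := (QuotientGroup.mk'_eq_mk' (Subgroup.closure S1)).mp hkey.symm
    rw [← hz]
    refine mul_mem (hSg_le_M ?_) (hJ_le_M ?_)
    · exact mul_mem (mul_mem (mul_mem hta htb) (inv_mem hta)) (inv_mem htb)
    · rw [hJ_eq]
      exact Subgroup.le_topologicalClosure _
        (Subgroup.closure_mono Set.subset_union_left hzP)
  have hKT_le_M : KTilde p d π ξ n ≤ (Subgroup.closure ((JGroup p d π xg ξ n : Set G) ∪
      Set.range fun i => σt i ^ p ^ n)).topologicalClosure := by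
    rw [hKT_eq]
    refine Subgroup.topologicalClosure_minimal _ ((Subgroup.closure_le _).mpr
      (Set.union_subset ?_ ?_)) hMclosed
    · rintro z ⟨a, ha, b, hb, rfl⟩
      exact hP a ha b hb
    · rintro z ⟨j, i, c, rfl⟩
      obtain ⟨hxk, hsS, -⟩ := hdecomp n _ (hinertiaN j i c)
      show c * (ξ j i) ^ p ^ n * c⁻¹ ∈ (Subgroup.closure ((JGroup p d π xg ξ n : Set G) ∪
        Set.range fun i => σt i ^ p ^ n)).topologicalClosure
      have h : c * (ξ j i) ^ p ^ n * c⁻¹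
          = (c * (ξ j i) ^ p ^ n * c⁻¹ * (xg n (c * (ξ j i) ^ p ^ n * c⁻¹))⁻¹)
            * xg n (c * (ξ j i) ^ p ^ n * c⁻¹) := by group
      rw [h]
      exact mul_mem (hSg_le_M hsS) (hJ_le_M (hS2J ⟨j, i, c, rfl⟩))
  -- Part 2
  have part2 : ∀ g ∈ GaloisLayer p d π n, ∃ x ∈ π.ker, g⁻¹ * x ∈ KTilde p d π ξ n := by
    intro g hg
    obtain ⟨hxk, hsS, -⟩ := hdecomp n g hg
    refine ⟨xg n g, hxk, ?_⟩
    have h1 : (xg n g)⁻¹ * (g * (xg n g)⁻¹)⁻¹ * ((xg n g)⁻¹)⁻¹ * ((g * (xg n g)⁻¹)⁻¹)⁻¹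
        ∈ KTilde p d π ξ n :=
      hC1KT _ (inv_mem (hXN hxk)) _ (inv_mem (hSgN hsS))
    have h2 : g⁻¹ * xg n g
        = ((xg n g)⁻¹ * (g * (xg n g)⁻¹)⁻¹ * ((xg n g)⁻¹)⁻¹ * ((g * (xg n g)⁻¹)⁻¹)⁻¹)
          * (g * (xg n g)⁻¹)⁻¹ := by group
    rw [h2]
    exact mul_mem h1 (inv_mem (hSgKT hsS))
  -- Part 3
  have part3 : ∀ x ∈ π.ker, (x ∈ KTilde p d π ξ n ↔ x ∈ JGroup p d π xg ξ n) := by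
    intro x hx
    constructor
    · intro hxKT
      have hM_le_V : (Subgroup.closure ((JGroup p d π xg ξ n : Set G) ∪
          Set.range fun i => σt i ^ p ^ n)).topologicalClosure ≤ V := by
        refine Subgroup.topologicalClosure_minimal _ ((Subgroup.closure_le _).mpr
          (Set.union_subset ?_ ?_)) (hVcoe ▸ hVclosed)
        · intro z hz
          have hzJ : z ∈ JGroup p d π xg ξ n := hz
          exact ⟨hXN (hJX hzJ), by rw [hxg_ker z (hJX hzJ)]; exact hzJ⟩
        · rintro z ⟨i, rfl⟩
          refine ⟨hSgN (hσtSg i), ?_⟩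
          have h : xg n (σt i ^ p ^ n) = 1 := by
            have h' := hxg_mul (σt i ^ p ^ n) (hσtSg i) 1 (one_mem _)
            rwa [mul_one] at h'
          rw [h]; exact one_mem _
      exact hVker x hx (hM_le_V (hKT_le_M hxKT))
    · exact fun h => hJKT h
  exact ⟨le_antisymm hM_le_KT hKT_le_M, part2, part3, part4⟩
end
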